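/- arXiv:2309.07530 — 7 statements merged into one kernel-verified Lean document; each statement's English description precedes it below -/
import Mathlib

section
/- Let p ≥ 1 be an integer, μ a probability measure on [0,1], f : [0,1] → [0,1] non-decreasing, and ε > 0. Then there exist an integer n ≤ ⌈1/ε⌉ and points 0 = c_0 < c_1 < ... < c_n = 1 together with values y_i^- ≤ y_i^+ (i = 1,...,n) such that y_i^- ≤ f(x) ≤ y_i^+ for all x ∈ (c_{i-1}, c_i), and Σ_{i=1}^n (y_i^+ - y_i^-)^p · μ((c_{i-1}, c_i)) ≤ ε^p. -/
open Set

set_option maxHeartbeats 2000000 in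
/-- The box-covering number `N_p(f, ε)` of a non-decreasing `f : [0,1] → [0,1]` is at most
`⌈1/ε⌉`: there is a box-cover with at most `⌈1/ε⌉` boxes whose generalized areas satisfy
`Σ (y_i⁺ - y_i⁻)^p · μ((c_{i-1}, c_i)) ≤ ε^p`. -/
theorem stmt1 (p : ℕ) (hp : 1 ≤ p) (μ : MeasureTheory.Measure ℝ)
    [MeasureTheory.IsProbabilityMeasure μ]
    (f : ℝ → ℝ) (hf : MonotoneOn f (Set.Icc 0 1))
    (hmap : ∀ x ∈ Set.Icc (0:ℝ) 1, f x ∈ Set.Icc (0:ℝ) 1)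
    (ε : ℝ) (hε : 0 < ε) :
    ∃ n : ℕ, 1 ≤ n ∧ n ≤ ⌈1 / ε⌉₊ ∧
      ∃ c : ℕ → ℝ, c 0 = 0 ∧ c n = 1 ∧ (∀ i < n, c i < c (i + 1)) ∧
        ∃ ylo yhi : ℕ → ℝ,
          (∀ i, 1 ≤ i → i ≤ n → ylo i ≤ yhi i ∧
            ∀ x ∈ Set.Ioo (c (i - 1)) (c i), ylo i ≤ f x ∧ f x ≤ yhi i) ∧
          ∑ i ∈ Finset.Icc 1 n,
              (yhi i - ylo i) ^ p * (μ (Set.Ioo (c (i - 1)) (c i))).toReal ≤ ε ^ p := by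
  classical
  have hceil1 : 1 ≤ ⌈1 / ε⌉₊ := Nat.ceil_pos.mpr (div_pos one_pos hε)
  rcases le_or_gt 1 ε with hε1 | hε1
  · -- trivial case ε ≥ 1 : single box [0,1] × [0,1]
    refine ⟨1, le_refl 1, hceil1, fun i => if i = 0 then 0 else 1, by simp, by simp, ?_, ?_⟩
    · intro i hi
      interval_cases i
      norm_num
    refine ⟨fun _ => 0, fun _ => 1, ?_, ?_⟩
    · intro i hi1 hin
      refine ⟨zero_le_one, fun x hx => ?_⟩
      have hx' : x ∈ Set.Icc (0:ℝ) 1 := by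
        have hi : i = 1 := le_antisymm hin hi1
        subst hi
        simp only [show (1:ℕ) - 1 = 0 from rfl] at hx
        simp only [if_pos rfl, if_neg one_ne_zero] at hx
        exact ⟨hx.1.le, hx.2.le⟩
      exact ⟨(hmap x hx').1, (hmap x hx').2⟩
    · have hμ : (μ (Set.Ioo (0:ℝ) 1)).toReal ≤ 1 := by
        have h1 : μ (Set.Ioo (0:ℝ) 1) ≤ 1 := MeasureTheory.prob_le_one
        have := ENNReal.toReal_mono ENNReal.one_ne_top h1
        simpa using this
      have hε1p : (1:ℝ) ≤ ε ^ p := one_le_pow₀ hε1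
      simp only [Finset.Icc_self, Finset.sum_singleton]
      norm_num
      calc (μ (Set.Ioo (0:ℝ) 1)).toReal ≤ 1 := hμ
        _ ≤ ε ^ p := hε1p
  · -- main case ε < 1
    set m : ℕ := ⌈1 / ε⌉₊ with hm
    have hmε : 1 ≤ (m:ℝ) * ε := by
      have h1 : (1:ℝ) / ε ≤ m := Nat.le_ceil _
      rw [div_le_iff₀ hε] at h1
      linarith
    have hm2 : 2 ≤ m := by
      have : (1:ℝ) < 1 / ε := (one_lt_div hε).mpr hε1
      have := Nat.lt_ceil.mpr (by exact_mod_cast this : ((1:ℕ):ℝ) < 1 / ε)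
      omega
    -- the sets whose suprema give partition points
    set S : ℕ → Set ℝ := fun i => insert (0:ℝ) {t ∈ Set.Icc (0:ℝ) 1 | f t < (i:ℝ) * ε} with hS
    have hSne : ∀ i, (S i).Nonempty := fun i => ⟨0, Set.mem_insert _ _⟩
    have hSbdd : ∀ i, BddAbove (S i) := by
      intro i
      refine ⟨1, fun t ht => ?_⟩
      rcases ht with rfl | ⟨ht, _⟩
      · exact zero_le_one
      · exact ht.2
    set g : ℕ → ℝ := fun i => sSup (S i) with hg
    have hg0 : ∀ i, 0 ≤ g i := fun i => le_csSup (hSbdd i) (Set.mem_insert _ _)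
    have hg1 : ∀ i, g i ≤ 1 := by
      intro i
      refine csSup_le (hSne i) fun t ht => ?_
      rcases ht with rfl | ⟨ht, _⟩
      · exact zero_le_one
      · exact ht.2
    set F : Finset ℝ := insert (0:ℝ) (insert 1 ((Finset.Icc 1 (m-1)).image g)) with hF
    have h0F : (0:ℝ) ∈ F := Finset.mem_insert_self _ _
    have h1F : (1:ℝ) ∈ F := Finset.mem_insert_of_mem (Finset.mem_insert_self _ _)
    have hFsub : ∀ x ∈ F, x ∈ Set.Icc (0:ℝ) 1 := by
      intro x hx
      rcases Finset.mem_insert.mp hx with rfl | hx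
      · exact ⟨le_refl 0, zero_le_one⟩
      rcases Finset.mem_insert.mp hx with rfl | hx
      · exact ⟨zero_le_one, le_refl 1⟩
      obtain ⟨i, _, rfl⟩ := Finset.mem_image.mp hx
      exact ⟨hg0 i, hg1 i⟩
    have hFcard : F.card ≤ m + 1 := by
      calc F.card ≤ (insert (1:ℝ) ((Finset.Icc 1 (m-1)).image g)).card + 1 :=
            Finset.card_insert_le _ _
        _ ≤ ((Finset.Icc 1 (m-1)).image g).card + 1 + 1 := by
            exact Nat.add_le_add_right (Finset.card_insert_le _ _) 1
        _ ≤ (Finset.Icc 1 (m-1)).card + 1 + 1 := by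
            exact Nat.add_le_add_right (Nat.add_le_add_right (Finset.card_image_le) 1) 1
        _ ≤ m + 1 := by
            rw [Nat.card_Icc]
            omega
    have hFcard2 : 2 ≤ F.card := Finset.one_lt_card.mpr ⟨0, h0F, 1, h1F, by norm_num⟩
    set l : List ℝ := F.sort (· ≤ ·) with hl
    have hlen : l.length = F.card := Finset.length_sort _
    set n : ℕ := F.card - 1 with hn
    set c : ℕ → ℝ := fun i => l.getD i 1 with hc
    have hcget : ∀ i (h : i < F.card), c i = l.get ⟨i, by rw [hlen]; exact h⟩ := by
      intro i h
      simp only [hc]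
      rw [List.getD_eq_getElem _ _ (by rw [hlen]; exact h)]
      rfl
    -- monotonicity of c on the range
    have hstrict : ∀ i k, i < k → k < F.card → c i < c k := by
      intro i k hik hk
      rw [hcget i (lt_trans hik hk), hcget k hk]
      exact (Finset.sortedLT_sort F).strictMono_get (by simpa using hik)
    have hmono : ∀ i k, i ≤ k → k < F.card → c i ≤ c k := by
      intro i k hik hk
      rcases eq_or_lt_of_le hik with rfl | h
      · exact le_refl _
      · exact (hstrict i k h hk).le
    -- c 0 = 0 and c n = 1
    have hc0 : c 0 = 0 := by
      rw [hcget 0 (by omega)]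
      have h := Finset.sorted_zero_eq_min' (s := F) (h := by rw [hlen]; omega)
      have hmin : F.min' ⟨0, h0F⟩ = 0 := by
        refine le_antisymm (Finset.min'_le _ _ h0F) ?_
        exact Finset.le_min' _ _ _ fun y hy => (hFsub y hy).1
      rw [← hmin]
      simpa using h
    have hcn : c n = 1 := by
      rw [hcget n (by omega)]
      have h := Finset.sorted_last_eq_max' (s := F)
        (h := by rw [hlen]; omega)
      have hmax : F.max' ⟨0, h0F⟩ = 1 := by
        refine le_antisymm (Finset.max'_le _ _ _ fun y hy => (hFsub y hy).2) ?_
        exact Finset.le_max' _ _ h1F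
      rw [← hmax]
      have hidx : n = l.length - 1 := by rw [hlen]
      simp only [List.get_eq_getElem, hidx]
      exact h
    -- each point of F is some c k
    have hmemF : ∀ x ∈ F, ∃ k, k < F.card ∧ c k = x := by
      intro x hx
      have hx' : x ∈ l := (Finset.mem_sort _).mpr hx
      obtain ⟨⟨k, hk⟩, hget⟩ := List.mem_iff_get.mp hx'
      refine ⟨k, by rwa [hlen] at hk, ?_⟩
      rw [hcget k (by rwa [hlen] at hk)]
      exact hget
    have hn1 : 1 ≤ n := by omega
    have hnm : n ≤ m := by omega
    -- interval inside [0,1]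
    have hIoosub : ∀ j, 1 ≤ j → j ≤ n → Set.Ioo (c (j-1)) (c j) ⊆ Set.Icc (0:ℝ) 1 := by
      intro j hj1 hjn x hx
      constructor
      · have : c 0 ≤ c (j-1) := hmono 0 (j-1) (by omega) (by omega)
        rw [hc0] at this; linarith [hx.1]
      · have : c j ≤ c n := hmono j n (by omega) (by omega)
        rw [hcn] at this; linarith [hx.2]
    -- KEY: oscillation of f on each open subinterval is at most ε
    have key : ∀ j, 1 ≤ j → j ≤ n → ∀ x ∈ Set.Ioo (c (j-1)) (c j),
        ∀ y ∈ Set.Ioo (c (j-1)) (c j), x ≤ y → f y ≤ f x + ε := by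
      intro j hj1 hjn x hx y hy hxy
      by_contra hcon
      push_neg at hcon
      have hxI : x ∈ Set.Icc (0:ℝ) 1 := hIoosub j hj1 hjn hx
      have hyI : y ∈ Set.Icc (0:ℝ) 1 := hIoosub j hj1 hjn hy
      have hfx := hmap x hxI
      have hfy := hmap y hyI
      set i : ℕ := min ⌊f y / ε⌋₊ (m - 1) with hi
      have hfy0 : (0:ℝ) ≤ f y := hfy.1
      have hfloor : (⌊f y / ε⌋₊ : ℝ) ≤ f y / ε := Nat.floor_le (div_nonneg hfy0 hε.le)
      have hfloor_le : (⌊f y / ε⌋₊ : ℝ) * ε ≤ f y := by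
        calc (⌊f y / ε⌋₊ : ℝ) * ε ≤ (f y / ε) * ε := mul_le_mul_of_nonneg_right hfloor hε.le
          _ = f y := by field_simp
      have hiε_le : (i:ℝ) * ε ≤ f y := by
        rcases min_cases ⌊f y / ε⌋₊ (m-1) with ⟨h1, _⟩ | ⟨h1, h2⟩
        · rw [hi, h1]; exact hfloor_le
        · rw [hi, h1]
          have : ((m-1:ℕ):ℝ) ≤ (⌊f y / ε⌋₊ : ℝ) := by exact_mod_cast h2.le
          nlinarith
      have hfx_lt : f x < (i:ℝ) * ε := by
        rcases min_cases ⌊f y / ε⌋₊ (m-1) with ⟨h1, _⟩ | ⟨h1, _⟩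
        · rw [hi, h1]
          have h4 := mul_lt_mul_of_pos_right (Nat.lt_floor_add_one (f y / ε)) hε
          have h5 : f y / ε * ε = f y := by field_simp
          rw [h5, add_mul, one_mul] at h4
          linarith
        · rw [hi, h1]
          have hcast : ((m-1:ℕ):ℝ) = (m:ℝ) - 1 := by
            have h1m : 1 ≤ m := by omega
            push_cast [h1m]
            ring
          rw [hcast]
          have : f y ≤ 1 := hfy.2
          nlinarith
      have hi1 : 1 ≤ i := by
        have hfl : 1 ≤ ⌊f y / ε⌋₊ := by
          apply Nat.le_floor
          rw [le_div_iff₀ hε]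
          have : 0 ≤ f x := hfx.1
          push_cast
          linarith
        omega
      have hgiF : g i ∈ F := by
        refine Finset.mem_insert_of_mem (Finset.mem_insert_of_mem ?_)
        exact Finset.mem_image.mpr ⟨i, Finset.mem_Icc.mpr ⟨hi1, min_le_right _ _⟩, rfl⟩
      have hxgi : x ≤ g i := le_csSup (hSbdd i) (Set.mem_insert_of_mem _ ⟨hxI, hfx_lt⟩)
      have hgiy : g i ≤ y := by
        refine csSup_le (hSne i) fun t ht => ?_
        rcases ht with rfl | ⟨htI, htlt⟩
        · have : 0 < x := lt_of_le_of_lt ((hmono 0 (j-1) (by omega) (by omega)).trans_eq' hc0) hx.1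
          linarith
        · by_contra hty
          push_neg at hty
          have : f y ≤ f t := hf hyI htI hty.le
          linarith
      obtain ⟨k, hk, hck⟩ := hmemF _ hgiF
      have h1 : c (j-1) < c k := by rw [hck]; exact lt_of_lt_of_le hx.1 hxgi
      have h2 : c k < c j := by rw [hck]; exact lt_of_le_of_lt hgiy hy.2
      have hk1 : j - 1 < k := by
        by_contra h
        push_neg at h
        exact absurd (hmono k (j-1) h (by omega)) (not_le.mpr h1)
      have hk2 : k < j := by
        by_contra h
        push_neg at h
        exact absurd (hmono j k h hk) (not_le.mpr h2)
      omega
    -- the box bounds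
    set ylo : ℕ → ℝ := fun j => sInf (f '' Set.Ioo (c (j-1)) (c j)) with hylo
    set yhi : ℕ → ℝ := fun j => ylo j + ε with hyhi
    have himgne : ∀ j, 1 ≤ j → j ≤ n → (f '' Set.Ioo (c (j-1)) (c j)).Nonempty := by
      intro j hj1 hjn
      have : c (j-1) < c j := hstrict (j-1) j (by omega) (by omega)
      exact (Set.nonempty_Ioo.mpr this).image f
    have himgbdd : ∀ j, 1 ≤ j → j ≤ n → BddBelow (f '' Set.Ioo (c (j-1)) (c j)) := by
      intro j hj1 hjn
      refine ⟨0, fun v hv => ?_⟩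
      obtain ⟨x, hx, rfl⟩ := hv
      exact (hmap x (hIoosub j hj1 hjn hx)).1
    have hbounds : ∀ i, 1 ≤ i → i ≤ n → ylo i ≤ yhi i ∧
        ∀ x ∈ Set.Ioo (c (i - 1)) (c i), ylo i ≤ f x ∧ f x ≤ yhi i := by
      intro j hj1 hjn
      refine ⟨by rw [hyhi]; simp; linarith, fun x hx => ?_⟩
      constructor
      · exact csInf_le (himgbdd j hj1 hjn) ⟨x, hx, rfl⟩
      · rw [hyhi]
        simp only [hylo]
        rw [← sub_le_iff_le_add]
        refine le_csInf (himgne j hj1 hjn) fun v hv => ?_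
        obtain ⟨y, hy, rfl⟩ := hv
        rw [sub_le_iff_le_add]
        rcases le_total x y with h | h
        · have := hf (hIoosub j hj1 hjn hx) (hIoosub j hj1 hjn hy) h
          linarith
        · exact key j hj1 hjn y hy x hx h
    refine ⟨n, hn1, hnm, c, hc0, hcn, fun i hi => hstrict i (i+1) (by omega) (by omega),
      ylo, yhi, hbounds, ?_⟩
    -- the sum bound
    have hterm : ∀ j, (yhi j - ylo j) ^ p = ε ^ p := by
      intro j; rw [hyhi]; ring_nf
    have hdisj : (↑(Finset.Icc 1 n) : Set ℕ).PairwiseDisjoint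
        (fun j => Set.Ioo (c (j-1)) (c j)) := by
      intro a ha b hb hab
      simp only [Finset.coe_Icc, Set.mem_Icc] at ha hb
      have hkey : ∀ a b : ℕ, 1 ≤ a → b ≤ n → a < b →
          Disjoint (Set.Ioo (c (a-1)) (c a)) (Set.Ioo (c (b-1)) (c b)) := by
        intro a b ha1 hbn hab
        rw [Set.disjoint_left]
        intro t ht ht'
        have : c a ≤ c (b-1) := hmono a (b-1) (by omega) (by omega)
        have := ht.2
        have := ht'.1
        linarith
      rcases lt_or_gt_of_ne hab with h | h
      · exact hkey a b ha.1 hb.2 h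
      · exact (hkey b a hb.1 ha.2 h).symm
    have hmeas : ∑ j ∈ Finset.Icc 1 n, μ (Set.Ioo (c (j-1)) (c j)) ≤ 1 := by
      rw [← MeasureTheory.measure_biUnion_finset hdisj (fun j _ => measurableSet_Ioo)]
      calc μ (⋃ j ∈ Finset.Icc 1 n, Set.Ioo (c (j-1)) (c j)) ≤ μ Set.univ :=
            MeasureTheory.measure_mono (Set.subset_univ _)
        _ = 1 := MeasureTheory.measure_univ
    have hsum_toReal : ∑ j ∈ Finset.Icc 1 n, (μ (Set.Ioo (c (j-1)) (c j))).toReal ≤ 1 := by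
      rw [← ENNReal.toReal_sum (fun j _ => MeasureTheory.measure_ne_top μ _)]
      have := ENNReal.toReal_mono ENNReal.one_ne_top hmeas
      simpa using this
    calc ∑ i ∈ Finset.Icc 1 n, (yhi i - ylo i) ^ p * (μ (Set.Ioo (c (i-1)) (c i))).toReal
        = ∑ i ∈ Finset.Icc 1 n, ε ^ p * (μ (Set.Ioo (c (i-1)) (c i))).toReal := by
          refine Finset.sum_congr rfl fun i _ => ?_
          rw [hterm]
      _ = ε ^ p * ∑ i ∈ Finset.Icc 1 n, (μ (Set.Ioo (c (i-1)) (c i))).toReal := by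
          rw [Finset.mul_sum]
      _ ≤ ε ^ p * 1 := by
          exact mul_le_mul_of_nonneg_left hsum_toReal (pow_nonneg hε.le p)
      _ = ε ^ p := mul_one _
end

section
/- Let g : [0,1] → [0,1] be non-decreasing with g(0) = 0 and g(1) = 1, and let p ≥ 1 be an integer. Then ∫_0^1 |u − g(u)|^p du ≤ 1/(1+p). -/
open MeasureTheory Set

/-- Key measure bound: the set where `|u - g u| ≥ s` inside `(0,1]` has measure
at most `1 - s`. -/
lemma meas_bound (g : ℝ → ℝ) (hg : MonotoneOn g (Set.Icc 0 1))
    (hmap : ∀ x ∈ Set.Icc (0:ℝ) 1, g x ∈ Set.Icc (0:ℝ) 1)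
    (s : ℝ) (hs : 0 < s) :
    MeasureTheory.volume ({u : ℝ | s ≤ |u - g u|} ∩ Set.Ioc 0 1)
      ≤ ENNReal.ofReal (1 - s) := by
  set A : Set ℝ := {u | u ∈ Set.Ioc (0:ℝ) 1 ∧ u + s ≤ g u} with hA
  set B : Set ℝ := {u | u ∈ Set.Ioc (0:ℝ) 1 ∧ g u + s ≤ u} with hB
  have hsplit : {u : ℝ | s ≤ |u - g u|} ∩ Set.Ioc 0 1 ⊆ A ∪ B := by
    rintro u ⟨hu1, hu2⟩
    rcases abs_cases (u - g u) with ⟨h, _⟩ | ⟨h, _⟩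
    · right; exact ⟨hu2, by simp only [Set.mem_setOf_eq] at hu1; linarith [h ▸ hu1]⟩
    · left; exact ⟨hu2, by simp only [Set.mem_setOf_eq] at hu1; linarith [h ▸ hu1]⟩
  have hAsub : A ⊆ Set.Icc 0 (1 - s) := by
    rintro u ⟨hu, hle⟩
    have := (hmap u (Set.Ioc_subset_Icc_self hu)).2
    exact ⟨le_of_lt hu.1, by linarith⟩
  have hBsub : B ⊆ Set.Icc s 1 := by
    rintro u ⟨hu, hle⟩
    have := (hmap u (Set.Ioc_subset_Icc_self hu)).1
    exact ⟨by linarith, hu.2⟩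
  rcases A.eq_empty_or_nonempty with hAe | hAne
  · -- no points above the diagonal: everything sits in [s,1]
    have : {u : ℝ | s ≤ |u - g u|} ∩ Set.Ioc 0 1 ⊆ Set.Icc s 1 := by
      intro u hu
      rcases hsplit hu with h | h
      · exact absurd h (by simp [hAe])
      · exact hBsub h
    calc MeasureTheory.volume ({u : ℝ | s ≤ |u - g u|} ∩ Set.Ioc 0 1)
        ≤ MeasureTheory.volume (Set.Icc s 1) := measure_mono this
      _ = ENNReal.ofReal (1 - s) := by rw [Real.volume_Icc]
  · set a₀ : ℝ := sSup A with ha₀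
    have hbdd : BddAbove A := ⟨1 - s, fun u hu => (hAsub hu).2⟩
    have ha₀le : a₀ ≤ 1 - s := csSup_le hAne (fun a ha => (hAsub ha).2)
    have ha₀nn : 0 ≤ a₀ := by
      obtain ⟨a, ha⟩ := hAne
      exact le_trans (hAsub ha).1 (le_csSup hbdd ha)
    -- cover by two intervals
    have hcover : {u : ℝ | s ≤ |u - g u|} ∩ Set.Ioc 0 1
        ⊆ Set.Icc 0 a₀ ∪ Set.Icc (a₀ + 2 * s) 1 := by
      intro u hu
      rcases hsplit hu with h | h
      · exact Or.inl ⟨(hAsub h).1, le_csSup hbdd h⟩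
      · rcases le_or_gt u a₀ with hle | hlt
        · exact Or.inl ⟨(hBsub h).1.trans' hs.le, hle⟩
        · refine Or.inr ⟨?_, (hBsub h).2⟩
          have : a₀ ≤ u - 2 * s := by
            apply csSup_le hAne
            intro a ha
            have hau : a ≤ u := (le_csSup hbdd ha).trans hlt.le
            -- monotonicity gives the 2s gap
            have hmono := hg (Set.Ioc_subset_Icc_self ha.1)
              (Set.Ioc_subset_Icc_self h.1) hau
            have h1 : a + s ≤ g a := ha.2
            have h2 : g u + s ≤ u := h.2
            linarith
          linarith
    calc MeasureTheory.volume ({u : ℝ | s ≤ |u - g u|} ∩ Set.Ioc 0 1)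
        ≤ MeasureTheory.volume (Set.Icc 0 a₀ ∪ Set.Icc (a₀ + 2 * s) 1) :=
          measure_mono hcover
      _ ≤ MeasureTheory.volume (Set.Icc (0:ℝ) a₀)
          + MeasureTheory.volume (Set.Icc (a₀ + 2 * s) 1) := measure_union_le _ _
      _ = ENNReal.ofReal (a₀ - 0) + ENNReal.ofReal (1 - (a₀ + 2 * s)) := by
          rw [Real.volume_Icc, Real.volume_Icc]
      _ ≤ ENNReal.ofReal (1 - s) := by
          rcases le_or_gt (1 - (a₀ + 2 * s)) 0 with hneg | hpos
          · rw [ENNReal.ofReal_of_nonpos hneg, add_zero, sub_zero]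
            exact ENNReal.ofReal_le_ofReal ha₀le
          · rw [sub_zero, ← ENNReal.ofReal_add ha₀nn hpos.le]
            exact ENNReal.ofReal_le_ofReal (by linarith)

/-- If `g : [0,1] → [0,1]` is non-decreasing with `g 0 = 0` and `g 1 = 1`, then
`∫_0^1 |u - g u|^p du ≤ 1/(1+p)` for every integer `p ≥ 1`. -/
theorem stmt2 (g : ℝ → ℝ) (hg : MonotoneOn g (Set.Icc 0 1))
    (hmap : ∀ x ∈ Set.Icc (0:ℝ) 1, g x ∈ Set.Icc (0:ℝ) 1)
    (h0 : g 0 = 0) (h1 : g 1 = 1) (p : ℕ) (hp : 1 ≤ p) :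
    ∫ u in (0:ℝ)..1, |u - g u| ^ p ≤ 1 / (1 + (p : ℝ)) := by
  have hp' : p - 1 + 1 = p := Nat.succ_pred_eq_of_pos hp
  have hpR : (0:ℝ) < p := by exact_mod_cast hp
  -- clamped version of g, monotone on all of ℝ
  set g' : ℝ → ℝ := fun x => g (max 0 (min 1 x)) with hg'
  have hclamp : ∀ x : ℝ, max 0 (min 1 x) ∈ Set.Icc (0:ℝ) 1 :=
    fun x => ⟨le_max_left _ _, max_le zero_le_one (min_le_left _ _)⟩
  have hg'mono : Monotone g' := by
    intro x y hxy
    exact hg (hclamp x) (hclamp y)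
      (max_le_max le_rfl (min_le_min le_rfl hxy))
  have hg'eq : ∀ x ∈ Set.Icc (0:ℝ) 1, g' x = g x := by
    intro x hx
    simp only [hg']
    rw [min_eq_right hx.2, max_eq_right hx.1]
  set f : ℝ → ℝ := fun u => |u - g' u| with hf
  have f_mble : Measurable f := (measurable_id.sub hg'mono.measurable).abs
  have f_nn : ∀ u, 0 ≤ f u := fun u => abs_nonneg _
  set μ : MeasureTheory.Measure ℝ := MeasureTheory.volume.restrict (Set.Ioc 0 1) with hμ
  -- key measure bound for f
  have key : ∀ t ∈ Set.Ioi (0:ℝ), μ {a : ℝ | t ≤ f a} ≤ ENNReal.ofReal (1 - t) := by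
    intro t ht
    rw [hμ, MeasureTheory.Measure.restrict_apply' measurableSet_Ioc]
    have hEq : {a : ℝ | t ≤ f a} ∩ Set.Ioc 0 1
        = {a : ℝ | t ≤ |a - g a|} ∩ Set.Ioc 0 1 := by
      ext a
      simp only [Set.mem_inter_iff, Set.mem_setOf_eq, and_congr_left_iff]
      intro ha
      rw [hf]
      simp only
      rw [hg'eq a (Set.Ioc_subset_Icc_self ha)]
    rw [hEq]
    exact meas_bound g hg hmap t ht
  -- the weight function for the layer cake formula
  set w : ℝ → ℝ := fun t => (p : ℝ) * t ^ (p - 1) with hw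
  have hw_cont : Continuous w := continuous_const.mul (continuous_pow _)
  have hw_int : ∀ t > (0:ℝ), IntervalIntegrable w MeasureTheory.volume 0 t :=
    fun t _ => hw_cont.intervalIntegrable 0 t
  have hw_nn : ∀ᵐ t ∂MeasureTheory.volume.restrict (Set.Ioi 0), 0 ≤ w t := by
    rw [MeasureTheory.ae_restrict_iff' measurableSet_Ioi]
    exact MeasureTheory.ae_of_all _ fun t ht =>
      mul_nonneg hpR.le (pow_nonneg (le_of_lt ht) _)
  have hw_prim : ∀ x : ℝ, ∫ t in (0:ℝ)..x, w t = x ^ p := by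
    intro x
    rw [hw]
    simp only
    rw [intervalIntegral.integral_const_mul, integral_pow, hp']
    have : ((p - 1 : ℕ) : ℝ) + 1 = (p : ℝ) := by exact_mod_cast hp'
    rw [this, zero_pow (by omega)]
    field_simp
    ring
  -- layer cake
  have lc := MeasureTheory.lintegral_comp_eq_lintegral_meas_le_mul μ
    (MeasureTheory.ae_of_all _ f_nn) f_mble.aemeasurable hw_int hw_nn
  simp only [hw_prim] at lc
  -- bound the right-hand side of the layer cake formula
  have rhs_bound : (∫⁻ t in Set.Ioi (0:ℝ), μ {a : ℝ | t ≤ f a} * ENNReal.ofReal (w t))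
      ≤ ENNReal.ofReal (1 / (1 + (p:ℝ))) := by
    have step1 : (∫⁻ t in Set.Ioi (0:ℝ), μ {a : ℝ | t ≤ f a} * ENNReal.ofReal (w t))
        ≤ ∫⁻ t in Set.Ioi (0:ℝ), ENNReal.ofReal ((1 - t) * w t) := by
      apply MeasureTheory.lintegral_mono_ae
      rw [MeasureTheory.ae_restrict_iff' measurableSet_Ioi]
      apply MeasureTheory.ae_of_all
      intro t ht
      have hwt : 0 ≤ w t := mul_nonneg hpR.le (pow_nonneg (le_of_lt ht) _)
      calc μ {a : ℝ | t ≤ f a} * ENNReal.ofReal (w t)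
          ≤ ENNReal.ofReal (1 - t) * ENNReal.ofReal (w t) :=
            mul_le_mul_left (key t ht) _
        _ = ENNReal.ofReal ((1 - t) * w t) := by
            rcases le_or_gt t 1 with h | h
            · exact (ENNReal.ofReal_mul (by linarith : (0:ℝ) ≤ 1 - t)).symm
            · rw [ENNReal.ofReal_of_nonpos (by linarith),
                ENNReal.ofReal_of_nonpos (mul_nonpos_of_nonpos_of_nonneg (by linarith) hwt),
                zero_mul]
    have hIoi1 : (∫⁻ t in Set.Ioi (1:ℝ), ENNReal.ofReal ((1 - t) * w t)) = 0 := by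
      have : (∫⁻ t in Set.Ioi (1:ℝ), ENNReal.ofReal ((1 - t) * w t))
          = ∫⁻ _t in Set.Ioi (1:ℝ), 0 := by
        apply MeasureTheory.setLIntegral_congr_fun measurableSet_Ioi
        intro t ht
        have ht' : (1:ℝ) < t := ht
        have hwt : 0 ≤ w t := mul_nonneg hpR.le (pow_nonneg (by linarith) _)
        show ENNReal.ofReal ((1 - t) * w t) = 0
        rw [ENNReal.ofReal_of_nonpos (mul_nonpos_of_nonpos_of_nonneg (by linarith) hwt)]
      rw [this, MeasureTheory.lintegral_zero]
    have step2 : (∫⁻ t in Set.Ioi (0:ℝ), ENNReal.ofReal ((1 - t) * w t))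
        = ∫⁻ t in Set.Ioc (0:ℝ) 1, ENNReal.ofReal ((1 - t) * w t) := by
      rw [← Set.Ioc_union_Ioi_eq_Ioi (zero_le_one (α := ℝ)),
        MeasureTheory.lintegral_union measurableSet_Ioi (Set.Ioc_disjoint_Ioi le_rfl),
        hIoi1, add_zero]
    have hcont : Continuous (fun t : ℝ => (1 - t) * w t) :=
      (continuous_const.sub continuous_id).mul hw_cont
    have step3 : (∫⁻ t in Set.Ioc (0:ℝ) 1, ENNReal.ofReal ((1 - t) * w t))
        = ENNReal.ofReal (∫ t in Set.Ioc (0:ℝ) 1, (1 - t) * w t) := by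
      rw [← MeasureTheory.ofReal_integral_eq_lintegral_ofReal]
      · exact (hcont.integrableOn_Ioc)
      · filter_upwards [MeasureTheory.ae_restrict_mem measurableSet_Ioc] with t ht
        exact mul_nonneg (by linarith [ht.2]) (mul_nonneg hpR.le (pow_nonneg ht.1.le _))
    have step4 : (∫ t in Set.Ioc (0:ℝ) 1, (1 - t) * w t) = 1 / (1 + (p:ℝ)) := by
      rw [← intervalIntegral.integral_of_le (zero_le_one (α := ℝ))]
      have hrw : ∀ t : ℝ, (1 - t) * w t = (p:ℝ) * t ^ (p - 1) - (p:ℝ) * t ^ p := by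
        intro t
        have htp : t * t ^ (p - 1) = t ^ p := by rw [← pow_succ', hp']
        show (1 - t) * ((p:ℝ) * t ^ (p - 1)) = (p:ℝ) * t ^ (p - 1) - (p:ℝ) * t ^ p
        calc (1 - t) * ((p:ℝ) * t ^ (p - 1))
            = (p:ℝ) * t ^ (p - 1) - (p:ℝ) * (t * t ^ (p - 1)) := by ring
          _ = (p:ℝ) * t ^ (p - 1) - (p:ℝ) * t ^ p := by rw [htp]
      simp only [hrw]
      rw [intervalIntegral.integral_sub (f := fun x : ℝ => (p:ℝ) * x ^ (p - 1))
        (g := fun x : ℝ => (p:ℝ) * x ^ p)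
        ((continuous_const.mul (continuous_pow _)).intervalIntegrable _ _)
        ((continuous_const.mul (continuous_pow _)).intervalIntegrable _ _),
        intervalIntegral.integral_const_mul, intervalIntegral.integral_const_mul,
        integral_pow, integral_pow, hp']
      have hc1 : ((p - 1 : ℕ) : ℝ) + 1 = (p : ℝ) := by exact_mod_cast hp'
      have hc2 : ((p : ℕ) : ℝ) + 1 = 1 + (p:ℝ) := by ring
      rw [hc1, hc2, one_pow, one_pow, zero_pow (by omega), zero_pow (by omega)]
      have h1p : (1:ℝ) + (p:ℝ) ≠ 0 := by positivity
      field_simp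
      ring
    calc (∫⁻ t in Set.Ioi (0:ℝ), μ {a : ℝ | t ≤ f a} * ENNReal.ofReal (w t))
        ≤ ∫⁻ t in Set.Ioi (0:ℝ), ENNReal.ofReal ((1 - t) * w t) := step1
      _ = ENNReal.ofReal (1 / (1 + (p:ℝ))) := by rw [step2, step3, step4]
  -- now convert the Bochner integral to the lintegral
  have hEqOn : Set.EqOn (fun u : ℝ => |u - g u| ^ p) (fun u => f u ^ p)
      (Set.uIcc (0:ℝ) 1) := by
    intro u hu
    rw [Set.uIcc_of_le (zero_le_one (α := ℝ))] at hu
    simp only [hf]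
    rw [hg'eq u hu]
  rw [intervalIntegral.integral_congr hEqOn,
    intervalIntegral.integral_of_le (zero_le_one (α := ℝ))]
  have hnn : 0 ≤ᵐ[μ] fun u => f u ^ p :=
    MeasureTheory.ae_of_all _ fun u => pow_nonneg (f_nn u) p
  have hmeas : MeasureTheory.AEStronglyMeasurable (fun u => f u ^ p) μ :=
    (f_mble.pow_const p).aestronglyMeasurable
  rw [MeasureTheory.integral_eq_lintegral_of_nonneg_ae hnn hmeas]
  have hfin : (∫⁻ u, ENNReal.ofReal (f u ^ p) ∂μ) ≤ ENNReal.ofReal (1 / (1 + (p:ℝ))) := by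
    rw [lc]; exact rhs_bound
  exact ENNReal.toReal_le_of_le_ofReal (by positivity) hfin
end

section
/- For all real numbers u_-, u_+ with 0 ≤ u_- ≤ 1/2 ≤ u_+ ≤ 1 and every integer p ≥ 1, u_-^{1+p} + (1 − u_+)^{1+p} + (u_+ − u_-)^{1+p}/(1+p) ≤ 1/(1+p), with equality when (u_-, u_+) = (0, 1). -/
lemma keyaux3 (q : ℕ) (hq : 1 ≤ q) (a : ℝ) (h0 : 0 ≤ a) (h1 : a ≤ 1/2) :
    (q : ℝ) * a ^ q ≤ a := by
  have hn : q ≤ 2 ^ (q - 1) := by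
    have := Nat.lt_two_pow_self (n := q - 1)
    omega
  have hcast : (q : ℝ) ≤ 2 ^ (q - 1) := by exact_mod_cast hn
  have hpow : a ^ (q - 1) ≤ (1/2 : ℝ) ^ (q - 1) := pow_le_pow_left₀ h0 h1 _
  have hkey : (q : ℝ) * a ^ (q - 1) ≤ 1 := by
    calc (q : ℝ) * a ^ (q - 1) ≤ (2 ^ (q-1) : ℝ) * (1/2 : ℝ) ^ (q - 1) := by
          apply mul_le_mul hcast hpow (by positivity) (by positivity)
      _ = 1 := by rw [← mul_pow]; norm_num
  have : a ^ q = a ^ (q - 1) * a := by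
    rw [← pow_succ]; congr 1; omega
  calc (q : ℝ) * a ^ q = ((q : ℝ) * a ^ (q - 1)) * a := by rw [this]; ring
    _ ≤ 1 * a := mul_le_mul_of_nonneg_right hkey h0
    _ = a := one_mul a

/-- For `0 ≤ u₋ ≤ 1/2 ≤ u₊ ≤ 1` and integer `p ≥ 1`,
`u₋^{1+p} + (1-u₊)^{1+p} + (u₊-u₋)^{1+p}/(1+p) ≤ 1/(1+p)`,
with equality at `(u₋, u₊) = (0, 1)`. -/
theorem stmt3 (p : ℕ) (hp : 1 ≤ p) (um up : ℝ)
    (h0 : 0 ≤ um) (h1 : um ≤ 1 / 2) (h2 : 1 / 2 ≤ up) (h3 : up ≤ 1) :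
    um ^ (1 + p) + (1 - up) ^ (1 + p) + (up - um) ^ (1 + p) / (1 + (p : ℝ))
      ≤ 1 / (1 + (p : ℝ)) ∧
    (0:ℝ) ^ (1 + p) + (1 - 1 : ℝ) ^ (1 + p) + ((1:ℝ) - 0) ^ (1 + p) / (1 + (p : ℝ))
      = 1 / (1 + (p : ℝ)) := by
  have hqpos : (0:ℝ) < 1 + (p : ℝ) := by positivity
  constructor
  · have hc : ((1 + p : ℕ) : ℝ) = 1 + (p : ℝ) := by push_cast; ring
    have h1' := keyaux3 (1 + p) (by omega) um h0 h1
    have h2' := keyaux3 (1 + p) (by omega) (1 - up) (by linarith) (by linarith)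
    rw [hc] at h1' h2'
    have h3' : (up - um) ^ (1 + p) ≤ up - um := by
      calc (up - um) ^ (1 + p) ≤ (up - um) ^ 1 :=
            pow_le_pow_of_le_one (by linarith) (by linarith) (by omega)
        _ = up - um := pow_one _
    rw [show um ^ (1+p) + (1 - up) ^ (1+p) + (up - um) ^ (1+p) / (1 + (p:ℝ)) =
        ((um ^ (1+p) + (1 - up) ^ (1+p)) * (1 + (p:ℝ)) + (up - um) ^ (1+p)) / (1 + (p:ℝ))
        from by field_simp]
    rw [div_le_div_iff₀ hqpos hqpos]
    nlinarith [h1', h2', h3']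
  · rw [zero_pow (by omega : 1 + p ≠ 0)]
    norm_num
end

section
/- Let n ∈ ℕ*, β ≥ 0, α ∈ [β/n, β], and let f be a strictly convex function on [0, β]. Then the maximum of Σ_{i=1}^n f(x_i) over all (x_1,...,x_n) with 0 ≤ x_i ≤ α for all i and Σ_{i=1}^n x_i = β equals m·f(α) + f(β − mα) + (n − m − 1)·f(0), where m = ⌊β/α⌋, and the maximum is attained at x_1 = ... = x_m = α, x_{m+1} = β − mα, x_{m+2} = ... = x_n = 0. -/
open Finset

/-- Chord inequality: moving mass apart increases sum of convex f. -/
lemma chord_ineq {β : ℝ} {f : ℝ → ℝ} (hf : ConvexOn ℝ (Set.Icc 0 β) f)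
    {u v x y : ℝ} (hv : 0 ≤ v) (hu : u ≤ β) (hvx : v ≤ x) (hxu : x ≤ u)
    (hsum : x + y = u + v) :
    f x + f y ≤ f u + f v := by
  rcases eq_or_lt_of_le (hvx.trans hxu) with h | h
  · have hx : x = v := le_antisymm (h ▸ hxu) hvx
    have hy : y = u := by linarith
    rw [hx, hy]; ring_nf; rfl
  · set t : ℝ := (x - v) / (u - v) with ht
    have ht0 : 0 ≤ t := div_nonneg (by linarith) (by linarith)
    have ht1 : t ≤ 1 := (div_le_one (by linarith)).2 (by linarith)
    have hne : u - v ≠ 0 := sub_ne_zero.2 h.ne'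
    have htv : t * (u - v) = x - v := by rw [ht]; field_simp
    have hxeq : t * u + (1 - t) * v = x := by nlinarith [htv]
    have hyeq : (1 - t) * u + t * v = y := by
      have : (t * u + (1 - t) * v) + ((1 - t) * u + t * v) = u + v := by ring
      linarith [hxeq]
    have humem : u ∈ Set.Icc 0 β := ⟨by linarith, hu⟩
    have hvmem : v ∈ Set.Icc 0 β := ⟨hv, by linarith⟩
    have h1 := hf.2 humem hvmem ht0 (by linarith : (0:ℝ) ≤ 1 - t) (by ring)
    have h2 := hf.2 humem hvmem (by linarith : (0:ℝ) ≤ 1 - t) ht0 (by ring)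
    simp only [smul_eq_mul] at h1 h2
    rw [hxeq] at h1; rw [hyeq] at h2
    linarith

/-- The bound value. -/
noncomputable def Bnd (f : ℝ → ℝ) (α : ℝ) (n : ℕ) (b : ℝ) : ℝ :=
  (⌊b / α⌋₊ : ℝ) * f α + f (b - ⌊b / α⌋₊ * α) + ((n : ℝ) - ⌊b / α⌋₊ - 1) * f 0

lemma main_bound {β α : ℝ} (hα0 : 0 < α) (hαβ : α ≤ β) {f : ℝ → ℝ}
    (hf : ConvexOn ℝ (Set.Icc 0 β) f) :
    ∀ n : ℕ, ∀ x : Fin (n + 1) → ℝ, (∀ i, 0 ≤ x i ∧ x i ≤ α) → (∑ i, x i) ≤ β →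
      ∑ i, f (x i) ≤ Bnd f α (n + 1) (∑ i, x i) := by
  intro n
  induction n with
  | zero =>
    intro x hx hxb
    have h0 := hx 0
    have hs : (∑ i, x i) = x 0 := by simp
    have hfs : (∑ i, f (x i)) = f (x 0) := by simp
    rw [hs, hfs]
    unfold Bnd
    rcases eq_or_lt_of_le h0.2 with h | h
    · rw [h]
      have h1 : ⌊α / α⌋₊ = 1 := by rw [div_self hα0.ne']; exact Nat.floor_one
      rw [h1]
      push_cast
      have e : α - (1:ℝ) * α = 0 := by ring
      rw [e]; linarith
    · have h1 : ⌊x 0 / α⌋₊ = 0 := Nat.floor_eq_zero.2 (by rw [div_lt_one hα0]; exact h)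
      rw [h1]
      push_cast
      have e : x 0 - (0:ℝ) * α = x 0 := by ring
      rw [e]; linarith
  | succ n ih =>
    intro x hx hxb
    have key : ∀ g : Fin (n+1+1) → ℝ, ∑ i, g i = g 0 + g 1 + ∑ i : Fin n, g i.succ.succ := by
      intro g
      rw [Fin.sum_univ_succ, Fin.sum_univ_succ]
      rw [Fin.succ_zero_eq_one]
      ring
    have partα : ∀ z : Fin (n+1+1) → ℝ, (∀ i, 0 ≤ z i ∧ z i ≤ α) → (∑ i, z i) ≤ β →
        (∃ j, z j = α) → ∑ i, f (z i) ≤ Bnd f α (n+1+1) (∑ i, z i) := by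
      rintro z hz hzb ⟨j, hj⟩
      set y : Fin (n+1) → ℝ := fun i => z (j.succAbove i) with hy
      have hsz : (∑ i, z i) = α + ∑ i, y i := by
        rw [Fin.sum_univ_succAbove z j, hj]
      have hsf : (∑ i, f (z i)) = f α + ∑ i, f (y i) := by
        rw [Fin.sum_univ_succAbove (fun i => f (z i)) j, hj]
      have hyb : (∑ i, y i) ≤ β := by linarith
      have hIH := ih y (fun i => hz _) hyb
      set b := ∑ i, z i with hb
      have hb' : (∑ i, y i) = b - α := by linarith
      have hynn : 0 ≤ ∑ i, y i := Finset.sum_nonneg fun i _ => (hz _).1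
      have hbα : α ≤ b := by linarith
      have hm1 : 1 ≤ ⌊b / α⌋₊ := Nat.le_floor (by rw [Nat.cast_one, le_div_iff₀ hα0]; linarith)
      have hfl : ⌊(b - α) / α⌋₊ = ⌊b / α⌋₊ - 1 := by
        have e : (b - α)/α = b/α - 1 := by field_simp
        rw [e, Nat.floor_sub_one]
      have hc : ((⌊b/α⌋₊ - 1 : ℕ) : ℝ) = (⌊b/α⌋₊ : ℝ) - 1 := by
        rw [Nat.cast_sub hm1, Nat.cast_one]
      rw [hsf]
      unfold Bnd at hIH ⊢
      rw [hb', hfl, hc] at hIH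
      have e2 : b - α - ((⌊b/α⌋₊:ℝ) - 1) * α = b - (⌊b/α⌋₊:ℝ) * α := by ring
      rw [e2] at hIH
      push_cast at hIH ⊢
      linarith
    have part0 : ∀ z : Fin (n+1+1) → ℝ, (∀ i, 0 ≤ z i ∧ z i ≤ α) → (∑ i, z i) ≤ β →
        (∃ j, z j = 0) → ∑ i, f (z i) ≤ Bnd f α (n+1+1) (∑ i, z i) := by
      rintro z hz hzb ⟨j, hj⟩
      set y : Fin (n+1) → ℝ := fun i => z (j.succAbove i) with hy
      have hsz : (∑ i, z i) = 0 + ∑ i, y i := by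
        rw [Fin.sum_univ_succAbove z j, hj]
      have hsf : (∑ i, f (z i)) = f 0 + ∑ i, f (y i) := by
        rw [Fin.sum_univ_succAbove (fun i => f (z i)) j, hj]
      have hyb : (∑ i, y i) ≤ β := by linarith
      have hIH := ih y (fun i => hz _) hyb
      have hb' : (∑ i, y i) = ∑ i, z i := by linarith
      rw [hb'] at hIH
      rw [hsf]
      unfold Bnd at hIH ⊢
      push_cast at hIH ⊢
      linarith
    -- general case: make an extreme coordinate by an exchange
    have h01 : (0 : Fin (n+1+1)) ≠ 1 := by
      simp [Fin.ext_iff]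
    have hx0 := hx 0
    have hx1 := hx 1
    set s : ℝ := x 0 + x 1 with hs
    set u : ℝ := min α s with hu
    set v : ℝ := s - u with hv
    have hs0 : 0 ≤ s := by linarith [hx0.1, hx1.1]
    have huα : u ≤ α := min_le_left _ _
    have hus : u ≤ s := min_le_right _ _
    have hu0 : 0 ≤ u := le_min hα0.le hs0
    have hv0 : 0 ≤ v := by simp [hv]; linarith
    have hx0u : x 0 ≤ u := le_min hx0.2 (by linarith [hx1.1])
    have hx1u : x 1 ≤ u := le_min hx1.2 (by linarith [hx0.1])
    have hvx0 : v ≤ x 0 := by simp only [hv]; linarith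
    have hvα : v ≤ α := hvx0.trans hx0.2
    set x' : Fin (n+1+1) → ℝ := fun i => if i = 0 then u else if i = 1 then v else x i with hx'
    have hx'0 : x' 0 = u := by simp [hx']
    have hx'1 : x' 1 = v := by simp [hx', h01.symm]
    have hx'rest : ∀ i : Fin n, x' i.succ.succ = x i.succ.succ := by
      intro i
      have h1 : i.succ.succ ≠ 0 := Fin.succ_ne_zero _
      have h2 : i.succ.succ ≠ 1 := by
        intro hcon
        rw [← Fin.succ_zero_eq_one] at hcon
        exact Fin.succ_ne_zero i (Fin.succ_injective _ hcon)
      simp [hx', h1, h2]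
    have hrest : (∑ i : Fin n, x' i.succ.succ) = ∑ i : Fin n, x i.succ.succ :=
      Finset.sum_congr rfl fun i _ => hx'rest i
    have hsum' : (∑ i, x' i) = ∑ i, x i := by
      rw [key x', key x, hx'0, hx'1, hrest]
      simp only [hv]; ring
    have hfrest : (∑ i : Fin n, f (x' i.succ.succ)) = ∑ i : Fin n, f (x i.succ.succ) :=
      Finset.sum_congr rfl fun i _ => by rw [hx'rest i]
    have hchord : f (x 0) + f (x 1) ≤ f u + f v :=
      chord_ineq hf hv0 (huα.trans hαβ) hvx0 hx0u (by simp only [hv]; ring)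
    have hsumf : (∑ i, f (x i)) ≤ ∑ i, f (x' i) := by
      rw [key (fun i => f (x i)), key (fun i => f (x' i))]
      simp only [hx'0, hx'1]
      rw [hfrest]
      linarith
    have hx'feas : ∀ i, 0 ≤ x' i ∧ x' i ≤ α := by
      intro i
      by_cases h0 : i = 0
      · rw [h0, hx'0]; exact ⟨hu0, huα⟩
      · by_cases h1 : i = 1
        · rw [h1, hx'1]; exact ⟨hv0, hvα⟩
        · simp only [hx', if_neg h0, if_neg h1]; exact hx i
    have hx'b : (∑ i, x' i) ≤ β := by rw [hsum']; exact hxb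
    rcases le_or_gt α s with hαs | hαs
    · have : x' 0 = α := by rw [hx'0]; simp [hu, min_eq_left hαs]
      have hb := partα x' hx'feas hx'b ⟨0, this⟩
      rw [hsum'] at hb
      linarith
    · have : x' 1 = 0 := by rw [hx'1]; simp [hv, hu, min_eq_right hαs.le]
      have hb := part0 x' hx'feas hx'b ⟨1, this⟩
      rw [hsum'] at hb
      linarith

/-- Maximizing `Σ f(x_i)` over `0 ≤ x_i ≤ α` with `Σ x_i = β`, for `f` strictly convex on
`[0, β]` and `α ∈ [β/n, β]`: the maximum equals `m f(α) + f(β - mα) + (n - m - 1) f(0)`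
where `m = ⌊β/α⌋`, attained at `x_1 = ... = x_m = α`, `x_{m+1} = β - mα`, the rest `0`. -/
theorem stmt7 (n : ℕ) (hn : 1 ≤ n) (β : ℝ) (hβ : 0 ≤ β) (α : ℝ)
    (hα1 : β / n ≤ α) (hα2 : α ≤ β) (f : ℝ → ℝ)
    (hf : StrictConvexOn ℝ (Set.Icc 0 β) f) :
    letI m : ℕ := ⌊β / α⌋₊
    IsGreatest {S : ℝ | ∃ x : Fin n → ℝ, (∀ i, 0 ≤ x i ∧ x i ≤ α) ∧
        (∑ i, x i) = β ∧ S = ∑ i, f (x i)}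
      ((m : ℝ) * f α + f (β - m * α) + ((n : ℝ) - m - 1) * f 0) ∧
    letI xstar : Fin n → ℝ := fun i =>
      if (i : ℕ) < m then α else if (i : ℕ) = m then β - m * α else 0
    ((∀ i, 0 ≤ xstar i ∧ xstar i ≤ α) ∧ (∑ i, xstar i) = β ∧
      (∑ i, f (xstar i)) = (m : ℝ) * f α + f (β - m * α) + ((n : ℝ) - m - 1) * f 0) := by
  have hn0 : (0:ℝ) < n := by exact_mod_cast hn
  have hα0 : 0 ≤ α := le_trans (div_nonneg hβ (le_of_lt hn0)) hα1
  rcases eq_or_lt_of_le hα0 with hα | hα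
  · -- α = 0, hence β = 0
    have hβ0 : β = 0 := by
      have h2 : β ≤ α * n := (div_le_iff₀ hn0).1 hα1
      rw [← hα] at h2
      exact le_antisymm (by linarith) hβ
    subst hβ0
    have hα' : α = 0 := le_antisymm hα2 hα0
    subst hα'
    have hm : ⌊(0:ℝ) / 0⌋₊ = 0 := by norm_num
    have hxs : ∀ i : Fin n, (if (i:ℕ) < ⌊(0:ℝ)/0⌋₊ then (0:ℝ) else if (i:ℕ) = ⌊(0:ℝ)/0⌋₊ then 0 - ⌊(0:ℝ)/0⌋₊ * 0 else 0) = 0 := by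
      intro i; split_ifs <;> ring
    have hT : (⌊(0:ℝ)/0⌋₊ : ℝ) * f 0 + f (0 - ⌊(0:ℝ)/0⌋₊ * 0) + ((n:ℝ) - ⌊(0:ℝ)/0⌋₊ - 1) * f 0 = n * f 0 := by
      rw [hm]; push_cast; ring_nf
    refine ⟨⟨⟨fun _ => 0, fun i => ⟨le_refl 0, le_refl 0⟩, by simp, ?_⟩, ?_⟩, ?_, ?_, ?_⟩
    · rw [hT]; simp [mul_comm]
    · rintro S ⟨x, hfeas, hsum, rfl⟩
      have hx0 : ∀ i, x i = 0 := fun i => le_antisymm (hfeas i).2 (hfeas i).1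
      have : (∑ i, f (x i)) = n * f 0 := by
        simp only [hx0]; rw [Finset.sum_const]; simp [mul_comm]
      rw [this, hT]
    · intro i; constructor <;> simp [hxs i]
    · simp only [hxs]; simp
    · simp only [hxs]; rw [hT, Finset.sum_const]; simp [mul_comm]
  · -- α > 0
    have hβn : β ≤ n * α := by
      have := (div_le_iff₀ hn0).1 hα1; linarith
    set m : ℕ := ⌊β / α⌋₊ with hmdef
    have hmle : (m:ℝ) * α ≤ β := by
      have := Nat.floor_le (div_nonneg hβ hα0)
      rw [← hmdef] at this
      calc (m:ℝ) * α ≤ (β/α) * α := by nlinarith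
        _ = β := by field_simp
    have hmlt : β < ((m:ℝ) + 1) * α := by
      have := Nat.lt_floor_add_one (β / α)
      rw [← hmdef] at this
      calc β = (β/α)*α := by field_simp
        _ < ((m:ℝ)+1)*α := by nlinarith
    have hmn : m ≤ n := by
      have h1 : β / α ≤ (n:ℝ) := (div_le_iff₀ hα).2 (by linarith)
      calc m ≤ ⌊(n:ℝ)⌋₊ := Nat.floor_le_floor h1
        _ = n := Nat.floor_natCast n
    -- feasibility of xstar
    have hfeas : ∀ i : Fin n, 0 ≤ (if (i:ℕ) < m then α else if (i:ℕ) = m then β - m * α else 0) ∧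
        (if (i:ℕ) < m then α else if (i:ℕ) = m then β - m * α else 0) ≤ α := by
      intro i
      split_ifs with h1 h2
      · exact ⟨hα0, le_refl α⟩
      · constructor <;> [linarith; linarith]
      · exact ⟨le_refl 0, hα0⟩
    -- sums over range
    have hdec : ∀ (a c : ℝ), ∀ i : ℕ, (if i < m then a else if i = m then c else 0) =
        (if i < m then a else 0) + (if i = m then c else 0) := by
      intro a c i
      by_cases h1 : i < m
      · rw [if_pos h1, if_pos h1, if_neg (by omega : ¬ i = m), add_zero]
      · rw [if_neg h1, if_neg h1, zero_add]
    have hsum1 : ∀ a : ℝ, (∑ i ∈ Finset.range n, if i < m then a else 0) = m * a := by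
      intro a
      have e1 : ∀ i : ℕ, (if i < m then a else 0) = (if i ∈ Finset.range m then a else 0) := by
        intro i; simp [Finset.mem_range]
      simp only [e1]
      rw [Finset.sum_ite_mem]
      have : Finset.range n ∩ Finset.range m = Finset.range m :=
        Finset.inter_eq_right.2 (Finset.range_subset_range.2 hmn)
      rw [this, Finset.sum_const, Finset.card_range, nsmul_eq_mul]
    have hsum2 : ∀ c : ℝ, (∑ i ∈ Finset.range n, if i = m then c else 0) =
        if m < n then c else 0 := by
      intro c
      rw [Finset.sum_ite_eq' (Finset.range n) m (fun _ => c)]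
      simp [Finset.mem_range]
    have hsplit : ∀ (a c : ℝ), (∑ i : Fin n, if (i:ℕ) < m then a else if (i:ℕ) = m then c else 0)
        = m * a + (if m < n then c else 0) := by
      intro a c
      rw [Fin.sum_univ_eq_sum_range (fun i => if i < m then a else if i = m then c else 0) n]
      simp only [hdec]
      rw [Finset.sum_add_distrib, hsum1, hsum2]
    have hmeq : ¬ m < n → (m:ℝ) * α = β := by
      intro h
      have : m = n := by omega
      rw [this]; rw [this] at hmle
      linarith
    have hsumx : (∑ i : Fin n, if (i:ℕ) < m then α else if (i:ℕ) = m then β - m * α else 0) = β := by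
      rw [hsplit]
      by_cases h : m < n
      · rw [if_pos h]; ring
      · rw [if_neg h, hmeq h]; ring
    have hfx : ∀ i : Fin n, f (if (i:ℕ) < m then α else if (i:ℕ) = m then β - m * α else 0)
        = (if (i:ℕ) < m then f α - f 0 else if (i:ℕ) = m then f (β - m * α) - f 0 else 0) + f 0 := by
      intro i; split_ifs <;> ring
    have hsumfx : (∑ i : Fin n, f (if (i:ℕ) < m then α else if (i:ℕ) = m then β - m * α else 0))
        = (m:ℝ) * f α + f (β - m * α) + ((n:ℝ) - m - 1) * f 0 := by
      simp only [hfx]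
      rw [Finset.sum_add_distrib, Finset.sum_const, Finset.card_univ, Fintype.card_fin,
        nsmul_eq_mul, hsplit]
      by_cases h : m < n
      · rw [if_pos h]; ring
      · rw [if_neg h]
        have hm' : (m:ℕ) = n := by omega
        have : β - (m:ℝ) * α = 0 := by rw [hmeq h]; ring
        rw [this, hm']
        ring
    refine ⟨⟨⟨fun i => if (i:ℕ) < m then α else if (i:ℕ) = m then β - m * α else 0,
        hfeas, hsumx, hsumfx.symm⟩, ?_⟩, hfeas, hsumx, hsumfx⟩
    rintro S ⟨x, hxfeas, hxsum, rfl⟩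
    obtain ⟨k, rfl⟩ : ∃ k, n = k + 1 := ⟨n - 1, by omega⟩
    have hb := main_bound hα hα2 hf.convexOn k x hxfeas (le_of_eq hxsum)
    rw [hxsum] at hb
    unfold Bnd at hb
    rw [← hmdef] at hb
    push_cast at hb ⊢
    linarith
end

section
/- Let p ≥ 1 be an integer, M, ε' > 0, and let w_1, ..., w_n ≥ 0 with Σ_i w_i ≤ 1. Then Σ_{i=1}^n min{(ε')^p, M^p · w_i^{2p+1}} ≤ 3 · M^{p/(2p+1)} · (ε')^{2p²/(2p+1)}. -/
/-- If `w_1, ..., w_n ≥ 0` sum to at most `1`, then for `ε', M > 0` and integer `p ≥ 1`,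
`Σ_i min{(ε')^p, M^p w_i^{2p+1}} ≤ 3 M^{p/(2p+1)} (ε')^{2p²/(2p+1)}`. -/
theorem stmt9 (p : ℕ) (hp : 1 ≤ p) (M ε' : ℝ) (hM : 0 < M) (hε' : 0 < ε')
    (n : ℕ) (w : Fin n → ℝ) (hw : ∀ i, 0 ≤ w i) (hsum : ∑ i, w i ≤ 1) :
    ∑ i, min (ε' ^ p) (M ^ p * w i ^ (2 * p + 1))
      ≤ 3 * M ^ ((p : ℝ) / (2 * p + 1)) * ε' ^ (2 * (p : ℝ) ^ 2 / (2 * p + 1)) := by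
  have hq : (0:ℝ) < 2*(p:ℝ)+1 := by positivity
  set θ : ℝ := 1/(2*(p:ℝ)+1) with hθdef
  have hθ0 : 0 ≤ θ := by positivity
  have hθ1 : 0 ≤ 1 - θ := by
    have : θ ≤ 1 := by
      rw [hθdef, div_le_one hq]
      have : (1:ℝ) ≤ (p:ℝ) := by exact_mod_cast hp
      linarith
    linarith
  set c : ℝ := M ^ ((p : ℝ) / (2 * p + 1)) * ε' ^ (2 * (p : ℝ) ^ 2 / (2 * p + 1)) with hcdef
  have hc0 : 0 ≤ c := by positivity
  have key : ∀ i, min (ε' ^ p) (M ^ p * w i ^ (2 * p + 1)) ≤ c * w i := by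
    intro i
    have hb : (0:ℝ) ≤ M ^ p * w i ^ (2 * p + 1) := mul_nonneg (pow_nonneg hM.le p) (pow_nonneg (hw i) _)
    have ha : (0:ℝ) ≤ ε' ^ p := by positivity
    have hm : 0 ≤ min (ε' ^ p) (M ^ p * w i ^ (2 * p + 1)) := le_min ha hb
    have e1 : min (ε' ^ p) (M ^ p * w i ^ (2 * p + 1))
        = (min (ε' ^ p) (M ^ p * w i ^ (2 * p + 1))) ^ (1 - θ)
          * (min (ε' ^ p) (M ^ p * w i ^ (2 * p + 1))) ^ θ := by
      rw [← Real.rpow_add' hm (by norm_num)]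
      norm_num [Real.rpow_one]
    rw [e1]
    have h2 : (min (ε' ^ p) (M ^ p * w i ^ (2 * p + 1))) ^ (1 - θ)
          * (min (ε' ^ p) (M ^ p * w i ^ (2 * p + 1))) ^ θ
        ≤ (ε' ^ p) ^ (1 - θ) * (M ^ p * w i ^ (2 * p + 1)) ^ θ := by
      apply mul_le_mul
      · exact Real.rpow_le_rpow hm (min_le_left _ _) hθ1
      · exact Real.rpow_le_rpow hm (min_le_right _ _) hθ0
      · positivity
      · positivity
    refine h2.trans_eq ?_
    rw [Real.mul_rpow (pow_nonneg hM.le p) (pow_nonneg (hw i) _),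
      ← Real.rpow_natCast ε' p, ← Real.rpow_natCast M p,
      ← Real.rpow_natCast (w i) (2*p+1),
      ← Real.rpow_mul hε'.le, ← Real.rpow_mul hM.le, ← Real.rpow_mul (hw i)]
    have hw1 : ((2*p+1 : ℕ) : ℝ) * θ = 1 := by
      rw [hθdef]; push_cast; field_simp
    have hε1 : (p:ℝ) * (1 - θ) = 2 * (p : ℝ) ^ 2 / (2 * p + 1) := by
      rw [hθdef]; field_simp; ring
    have hM1 : (p:ℝ) * θ = (p : ℝ) / (2 * p + 1) := by
      rw [hθdef]; field_simp
    rw [hw1, hε1, hM1, Real.rpow_one, hcdef]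
    ring
  calc ∑ i, min (ε' ^ p) (M ^ p * w i ^ (2 * p + 1)) ≤ ∑ i, c * w i :=
        Finset.sum_le_sum fun i _ => key i
    _ = c * ∑ i, w i := by rw [Finset.mul_sum]
    _ ≤ c * 1 := by
        apply mul_le_mul_of_nonneg_left hsum hc0
    _ ≤ 3 * c := by linarith
    _ = 3 * M ^ ((p : ℝ) / (2 * p + 1)) * ε' ^ (2 * (p : ℝ) ^ 2 / (2 * p + 1)) := by
        rw [hcdef]; ring
end

section
/- Let f : [0,1] → [0,1] be non-decreasing, let 0 = b_0 < b_1 < ... < b_n = 1, and let μ be a probability measure on [0,1]. For each k with μ((b_{k-1}, b_k)) > 0 let X_k be an independent random variable with law μ(·|(b_{k-1}, b_k)), and define Î = Σ_{k : μ((b_{k-1},b_k))>0} μ((b_{k-1}, b_k))·f(X_k) + Σ_{k=0}^n μ({b_k})·f(b_k). Then E[Î] = ∫_0^1 f dμ and E[|Î − ∫_0^1 f dμ|] ≤ (1/2)·√(Σ_{k=1}^n a_k²), where a_k = μ((b_{k-1}, b_k))·(f(b_k) − f(b_{k-1})). -/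
open MeasureTheory ProbabilityTheory

lemma l1_le_sqrt_l2 {Ω : Type*} [MeasurableSpace Ω] (P : Measure Ω)
    [IsProbabilityMeasure P] (W : Ω → ℝ) (hW : MemLp W 2 P) :
    ∫ ω, |W ω| ∂P ≤ Real.sqrt (∫ ω, (W ω) ^ 2 ∂P) := by
  have h2 : Integrable (fun ω => W ω ^ 2) P := hW.integrable_sq
  have h1 : Integrable (fun ω => |W ω|) P := (hW.integrable one_le_two).abs
  set m := ∫ ω, |W ω| ∂P with hm
  have hm0 : 0 ≤ m := integral_nonneg fun ω => abs_nonneg _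
  have key : m ^ 2 ≤ ∫ ω, W ω ^ 2 ∂P := by
    have h0 : (0:ℝ) ≤ ∫ ω, (|W ω| - m) ^ 2 ∂P := integral_nonneg fun ω => sq_nonneg _
    have hexp : ∫ ω, (|W ω| - m) ^ 2 ∂P = (∫ ω, W ω ^ 2 ∂P) - m ^ 2 := by
      have hcong : ∀ ω, (|W ω| - m) ^ 2 = W ω ^ 2 - 2 * m * |W ω| + m ^ 2 := by
        intro ω; rw [← sq_abs (W ω)]; ring
      simp_rw [hcong]
      have e1 : Integrable (fun ω => W ω ^ 2 - 2 * m * |W ω|) P :=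
        h2.sub (h1.const_mul (2 * m))
      have e2 : Integrable (fun ω => 2 * m * |W ω|) P := h1.const_mul (2 * m)
      rw [integral_add e1 (integrable_const (m ^ 2)), integral_sub h2 e2,
        integral_const_mul, integral_const]
      simp only [measure_univ, probReal_univ, ENNReal.toReal_one, smul_eq_mul, one_mul, ← hm]
      ring
    linarith
  exact Real.le_sqrt_of_sq_le key


/-- Stratified Monte-Carlo estimator: with `X_k` independent, `X_k ~ μ(·|(b_{k-1}, b_k))`,
the estimator `Î = Σ_k μ((b_{k-1},b_k)) f(X_k) + Σ_k μ({b_k}) f(b_k)` is unbiased for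
`∫ f dμ` and satisfies `E|Î - ∫ f dμ| ≤ (1/2)√(Σ_k a_k²)` with
`a_k = μ((b_{k-1},b_k)) (f(b_k) - f(b_{k-1}))`. -/
theorem stmt17 (f : ℝ → ℝ) (hf : MonotoneOn f (Set.Icc 0 1))
    (hfmeas : Measurable f)
    (hmap : ∀ x ∈ Set.Icc (0:ℝ) 1, f x ∈ Set.Icc (0:ℝ) 1)
    (n : ℕ) (hn : 1 ≤ n) (b : ℕ → ℝ) (hb0 : b 0 = 0) (hbn : b n = 1)
    (hbmono : ∀ k < n, b k < b (k + 1))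
    (μ : Measure ℝ) [IsProbabilityMeasure μ] (hμ : μ (Set.Icc (0:ℝ) 1)ᶜ = 0)
    {Ω : Type*} [MeasurableSpace Ω] (P : Measure Ω) [IsProbabilityMeasure P]
    (X : ℕ → Ω → ℝ)
    (hXmeas : ∀ k, Measurable (X k))
    (hindep : iIndepFun X P)
    (hlaw : ∀ k, 1 ≤ k → k ≤ n → μ (Set.Ioo (b (k - 1)) (b k)) ≠ 0 →
      Measure.map (X k) P = ProbabilityTheory.cond μ (Set.Ioo (b (k - 1)) (b k))) :
    letI Ihat : Ω → ℝ := fun ω =>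
      (∑ k ∈ (Finset.Icc 1 n).filter (fun k => μ (Set.Ioo (b (k - 1)) (b k)) ≠ 0),
        (μ (Set.Ioo (b (k - 1)) (b k))).toReal * f (X k ω)) +
      ∑ k ∈ Finset.range (n + 1), (μ {b k}).toReal * f (b k)
    (∫ ω, Ihat ω ∂P) = ∫ x, f x ∂μ ∧
    (∫ ω, |Ihat ω - ∫ x, f x ∂μ| ∂P) ≤
      (1 / 2) * Real.sqrt (∑ k ∈ Finset.Icc 1 n,
        ((μ (Set.Ioo (b (k - 1)) (b k))).toReal * (f (b k) - f (b (k - 1)))) ^ 2) := by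
  classical
  -- notation
  set s : ℕ → Set ℝ := fun k => Set.Ioo (b (k - 1)) (b k) with hs
  set w : ℕ → ℝ := fun k => (μ (s k)).toReal with hwdef
  set F : Finset ℕ := (Finset.Icc 1 n).filter (fun k => μ (Set.Ioo (b (k - 1)) (b k)) ≠ 0) with hF
  set C : ℝ := ∑ k ∈ Finset.range (n + 1), (μ {b k}).toReal * f (b k) with hC
  set Y : ℕ → Ω → ℝ := fun k ω => w k * f (X k ω) with hY
  have hFmem : ∀ k ∈ F, 1 ≤ k ∧ k ≤ n ∧ μ (s k) ≠ 0 := by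
    intro k hk
    simp only [hF, Finset.mem_filter, Finset.mem_Icc] at hk
    exact ⟨hk.1.1, hk.1.2, hk.2⟩
  -- monotonicity of b
  have hblt : ∀ j, j ≤ n → ∀ i, i < j → b i < b j := by
    intro j
    induction j with
    | zero => exact fun _ i h => absurd h (Nat.not_lt_zero i)
    | succ j ih =>
      intro hj i hi
      have hj' : j < n := Nat.lt_of_succ_le hj
      rcases Nat.lt_succ_iff_lt_or_eq.mp hi with h | h
      · exact lt_trans (ih (le_of_lt hj') i h) (hbmono j hj')
      · exact h ▸ hbmono j hj'
  have hble : ∀ i j, i ≤ j → j ≤ n → b i ≤ b j := by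
    intro i j hij hj
    rcases lt_or_eq_of_le hij with h | h
    · exact le_of_lt (hblt j hj i h)
    · exact h ▸ le_refl _
  have hbmem : ∀ k, k ≤ n → b k ∈ Set.Icc (0:ℝ) 1 := fun k hk =>
    ⟨hb0 ▸ hble 0 k (Nat.zero_le k) hk, hbn ▸ hble k n hk le_rfl⟩
  -- a.e. membership
  have hXae : ∀ k ∈ F, ∀ᵐ ω ∂P, X k ω ∈ s k := by
    intro k hk
    obtain ⟨h1, h2, h3⟩ := hFmem k hk
    have hmapk := hlaw k h1 h2 h3
    have hnull : P (X k ⁻¹' (s k)ᶜ) = 0 := by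
      have : Measure.map (X k) P ((s k)ᶜ) = 0 := by
        rw [hmapk, cond_apply measurableSet_Ioo]
        simp [hs]
      rwa [Measure.map_apply (hXmeas k) measurableSet_Ioo.compl] at this
    rw [ae_iff]
    convert hnull using 2
    rfl
  -- bounds on f (X k)
  have hfae : ∀ k ∈ F, ∀ᵐ ω ∂P, Y k ω ∈ Set.Icc (w k * f (b (k-1))) (w k * f (b k)) := by
    intro k hk
    obtain ⟨h1, h2, _⟩ := hFmem k hk
    filter_upwards [hXae k hk] with ω hω
    have hxI : X k ω ∈ Set.Icc (0:ℝ) 1 := by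
      have h1' := (hbmem (k-1) (le_trans (Nat.sub_le k 1) h2)).1
      have h2' := (hbmem k h2).2
      exact ⟨le_trans h1' (le_of_lt hω.1), le_trans (le_of_lt hω.2) h2'⟩
    have hw0 : 0 ≤ w k := ENNReal.toReal_nonneg
    constructor
    · exact mul_le_mul_of_nonneg_left
        (hf (hbmem (k-1) (le_trans (Nat.sub_le k 1) h2)) hxI (le_of_lt hω.1)) hw0
    · exact mul_le_mul_of_nonneg_left (hf hxI (hbmem k h2) (le_of_lt hω.2)) hw0
  have hYmeas : ∀ k, AEStronglyMeasurable (Y k) P := fun k =>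
    ((hfmeas.comp (hXmeas k)).const_mul (w k)).aestronglyMeasurable
  have hYmem : ∀ k ∈ F, MemLp (Y k) 2 P := fun k hk =>
    memLp_of_bounded (hfae k hk) (hYmeas k) 2
  have hYint : ∀ k ∈ F, Integrable (Y k) P := fun k hk => (hYmem k hk).integrable one_le_two
  -- expectation of Y k
  have hEY : ∀ k ∈ F, ∫ ω, Y k ω ∂P = ∫ x in s k, f x ∂μ := by
    intro k hk
    obtain ⟨h1, h2, h3⟩ := hFmem k hk
    have hmapk := hlaw k h1 h2 h3
    have hint : ∫ ω, f (X k ω) ∂P = (μ (s k)).toReal⁻¹ * ∫ x in s k, f x ∂μ := by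
      rw [← integral_map (hXmeas k).aemeasurable hfmeas.aestronglyMeasurable, hmapk,
        ProbabilityTheory.cond, integral_smul_measure, ENNReal.toReal_inv]
      rfl
    have hw0 : w k ≠ 0 := by
      simp only [hwdef]
      exact ENNReal.toReal_ne_zero.mpr ⟨h3, measure_ne_top μ _⟩
    simp only [hY]
    rw [integral_const_mul, hint, hwdef]
    field_simp
    exact mul_div_cancel_left₀ _ hw0
  -- independence of Y's
  have hpair : Set.Pairwise ↑F (fun i j => IndepFun (Y i) (Y j) P) := by
    intro i _ j _ hij
    exact (hindep.indepFun hij).comp (hfmeas.const_mul (w i)) (hfmeas.const_mul (w j))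
  -- sum S
  set S : Ω → ℝ := ∑ k ∈ F, Y k with hSd
  have hSapp : ∀ ω, S ω = ∑ k ∈ F, Y k ω := fun ω => Finset.sum_apply ω F Y
  have hSmem : MemLp S 2 P := memLp_finset_sum' F hYmem
  have hSint : Integrable S P := hSmem.integrable one_le_two
  have hES : ∫ ω, S ω ∂P = ∑ k ∈ F, ∫ x in s k, f x ∂μ := by
    simp only [hSapp]
    rw [integral_finset_sum F hYint]
    exact Finset.sum_congr rfl hEY
  -- variance
  have hvarsum : variance S P = ∑ k ∈ F, variance (Y k) P :=
    IndepFun.variance_sum hYmem hpair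
  have hvarle : ∀ k ∈ F, variance (Y k) P ≤ (w k * (f (b k) - f (b (k-1)))) ^ 2 / 4 := by
    intro k hk
    calc variance (Y k) P ≤ ((w k * f (b k) - w k * f (b (k-1))) / 2) ^ 2 :=
          variance_le_sq_of_bounded (hfae k hk)
            ((hfmeas.comp (hXmeas k)).const_mul (w k)).aemeasurable
      _ = (w k * (f (b k) - f (b (k-1)))) ^ 2 / 4 := by ring
  -- decomposition of the integral of f
  have hrestrict : μ.restrict (Set.Icc (0:ℝ) 1) = μ :=
    Measure.restrict_eq_self_of_ae_mem (mem_ae_iff.mpr hμ)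
  have hsetEq : Set.Icc (0:ℝ) 1 =
      (⋃ k ∈ Finset.Icc 1 n, s k) ∪ (⋃ k ∈ Finset.range (n+1), ({b k} : Set ℝ)) := by
    ext x
    simp only [Set.mem_union, Set.mem_iUnion, Finset.mem_Icc, Finset.mem_range,
      Set.mem_singleton_iff, Set.mem_Icc, hs, Set.mem_Ioo, exists_prop]
    constructor
    · rintro ⟨hx0, hx1⟩
      by_cases hpt : ∃ k, k < n + 1 ∧ x = b k
      · exact Or.inr hpt
      · push_neg at hpt
        have hex : ∃ k, x < b k :=
          ⟨n, lt_of_le_of_ne (hbn ▸ hx1) (hpt n (Nat.lt_succ_self n))⟩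
        have hk1 : x < b (Nat.find hex) := Nat.find_spec hex
        set k := Nat.find hex with hkdef
        have hkpos : 1 ≤ k := by
          rcases Nat.eq_zero_or_pos k with h | h
          · exfalso; rw [h, hb0] at hk1
            have : x ≠ b 0 := hpt 0 (by omega)
            rw [hb0] at this
            exact absurd hk1 (not_lt.mpr hx0)
          · exact h
        have hkn : k ≤ n := by
          by_contra hcon
          push_neg at hcon
          have hmin := Nat.find_min hex hcon
          exact hmin (lt_of_le_of_ne (show x ≤ b n by rw [hbn]; exact hx1)
            (hpt n (Nat.lt_succ_self n)))
        have hk0 : ¬ x < b (k-1) := Nat.find_min hex (by omega)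
        push_neg at hk0
        refine Or.inl ⟨k, ⟨hkpos, hkn⟩, lt_of_le_of_ne hk0 fun h => ?_, hk1⟩
        exact hpt (k-1) (by omega) h.symm
    · rintro (⟨k, ⟨hk1, hkn⟩, hx⟩ | ⟨k, hk, rfl⟩)
      · have ha := (hbmem (k-1) (le_trans (Nat.sub_le k 1) hkn)).1
        have hb' := (hbmem k hkn).2
        exact ⟨le_trans ha (le_of_lt hx.1), le_trans (le_of_lt hx.2) hb'⟩
      · exact hbmem k (Nat.lt_succ_iff.mp hk)
  have hdisjA : Set.Pairwise ↑(Finset.Icc 1 n) (Function.onFun Disjoint s) := by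
    intro i hi j hj hij
    simp only [Finset.coe_Icc, Set.mem_Icc] at hi hj
    rcases Nat.lt_or_ge i j with h | h
    · refine Set.disjoint_left.mpr fun x hxi hxj => ?_
      have hle : b i ≤ b (j-1) := hble i (j-1) (by omega) (by omega)
      have h1 : x < b i := hxi.2
      have h2 : b (j-1) < x := hxj.1
      linarith
    · have h' : j < i := by omega
      refine Set.disjoint_left.mpr fun x hxi hxj => ?_
      have hle : b j ≤ b (i-1) := hble j (i-1) (by omega) (by omega)
      have h1 : x < b j := hxj.2
      have h2 : b (i-1) < x := hxi.1
      linarith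
  have hdisjAB : Disjoint (⋃ k ∈ Finset.Icc 1 n, s k)
      (⋃ k ∈ Finset.range (n+1), ({b k} : Set ℝ)) := by
    refine Set.disjoint_left.mpr fun x hx hx' => ?_
    simp only [Set.mem_iUnion, Finset.mem_Icc, Finset.mem_range, Set.mem_singleton_iff,
      exists_prop, hs, Set.mem_Ioo] at hx hx'
    obtain ⟨k, ⟨hk1, hkn⟩, hxk⟩ := hx
    obtain ⟨j, hj, rfl⟩ := hx'
    rcases Nat.lt_or_ge j k with h | h
    · have : b j ≤ b (k-1) := hble j (k-1) (by omega) (by omega)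
      linarith [hxk.1]
    · have : b k ≤ b j := hble k j h (by omega)
      linarith [hxk.2]
  have hfIcc : IntegrableOn f (Set.Icc (0:ℝ) 1) μ := by
    refine Integrable.mono' (integrable_const 1) hfmeas.aestronglyMeasurable ?_
    filter_upwards [ae_restrict_mem measurableSet_Icc] with x hx
    have h' := hmap x hx
    rw [Real.norm_eq_abs, abs_le]
    exact ⟨by linarith [h'.1], h'.2⟩
  have hIntA : IntegrableOn f (⋃ k ∈ Finset.Icc 1 n, s k) μ :=
    hfIcc.mono_set (by rw [hsetEq]; exact Set.subset_union_left)
  have hIntB : IntegrableOn f (⋃ k ∈ Finset.range (n+1), ({b k} : Set ℝ)) μ :=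
    hfIcc.mono_set (by rw [hsetEq]; exact Set.subset_union_right)
  have hmeasB : MeasurableSet (⋃ k ∈ Finset.range (n+1), ({b k} : Set ℝ)) :=
    Set.Finite.measurableSet_biUnion (Finset.range (n+1)).finite_toSet
      fun k _ => measurableSet_singleton _
  have hpt : ∀ k : ℕ, ∫ x in ({b k} : Set ℝ), f x ∂μ = (μ {b k}).toReal * f (b k) := by
    intro k
    rw [Measure.restrict_singleton, integral_smul_measure, integral_dirac, smul_eq_mul]
  have hIdecomp : ∫ x, f x ∂μ = (∑ k ∈ Finset.Icc 1 n, ∫ x in s k, f x ∂μ) + C := by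
    conv_lhs => rw [← hrestrict]
    rw [hsetEq,
      setIntegral_union hdisjAB hmeasB hIntA hIntB,
      integral_biUnion_finset (Finset.Icc 1 n) (fun k _ => measurableSet_Ioo) hdisjA
        (fun k hk => hIntA.mono_set (fun x hx => Set.mem_biUnion hk hx)),
      integral_biUnion_finset (Finset.range (n+1)) (fun k _ => measurableSet_singleton _)
        (by
          intro i hi j hj hij
          simp only [Finset.coe_range, Set.mem_Iio] at hi hj
          have : b i ≠ b j := by
            rcases Nat.lt_or_ge i j with h | h
            · exact ne_of_lt (hblt j (by omega) i h)
            · exact (ne_of_lt (hblt i (by omega) j (by omega))).symm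
          simpa [Function.onFun, Set.disjoint_singleton] using this)
        (fun k hk => hIntB.mono_set (fun x hx => Set.mem_biUnion hk hx))]
    rw [hC]
    congr 1
    exact Finset.sum_congr rfl fun k _ => hpt k
  have hsumF : ∑ k ∈ Finset.Icc 1 n, ∫ x in s k, f x ∂μ = ∑ k ∈ F, ∫ x in s k, f x ∂μ := by
    refine (Finset.sum_subset (Finset.filter_subset _ _) fun k hk hnk => ?_).symm
    have h0 : μ (s k) = 0 := by
      by_contra h0
      exact hnk (Finset.mem_filter.mpr ⟨hk, h0⟩)
    rw [Measure.restrict_eq_zero.mpr h0]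
    exact integral_zero_measure f
  have hI : ∫ x, f x ∂μ = (∫ ω, S ω ∂P) + C := by
    rw [hIdecomp, hsumF, hES]
  -- first conclusion
  have hEI : ∫ ω, ((∑ k ∈ F, Y k ω) + C) ∂P = ∫ x, f x ∂μ := by
    have : (fun ω => (∑ k ∈ F, Y k ω) + C) = fun ω => S ω + C := by
      funext ω; rw [hSapp]
    rw [this, integral_add hSint (integrable_const C), integral_const, probReal_univ]
    simp [hI]
  constructor
  · exact hEI
  -- second conclusion
  set T := ∑ k ∈ Finset.Icc 1 n, (w k * (f (b k) - f (b (k - 1)))) ^ 2 with hT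
  have hWmem : MemLp (fun ω => S ω - (∫ ω', S ω' ∂P)) 2 P := hSmem.sub (memLp_const _)
  have h1 : ∫ ω, |S ω - (∫ ω', S ω' ∂P)| ∂P ≤
      Real.sqrt (∫ ω, (S ω - (∫ ω', S ω' ∂P)) ^ 2 ∂P) := l1_le_sqrt_l2 P _ hWmem
  have h2 : ∫ ω, (S ω - (∫ ω', S ω' ∂P)) ^ 2 ∂P = variance S P := by
    rw [variance_eq_integral hSmem.aemeasurable]
  have h3 : variance S P ≤ T / 4 := by
    rw [hvarsum]
    calc ∑ k ∈ F, variance (Y k) P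
        ≤ ∑ k ∈ F, (w k * (f (b k) - f (b (k-1)))) ^ 2 / 4 := Finset.sum_le_sum hvarle
      _ ≤ ∑ k ∈ Finset.Icc 1 n, (w k * (f (b k) - f (b (k-1)))) ^ 2 / 4 :=
          Finset.sum_le_sum_of_subset_of_nonneg (Finset.filter_subset _ _)
            (fun k _ _ => by positivity)
      _ = T / 4 := by rw [hT, Finset.sum_div]
  have hsqrt : Real.sqrt (T / 4) = (1/2) * Real.sqrt T := by
    rw [show T / 4 = (1/2)^2 * T by ring, Real.sqrt_mul (sq_nonneg _),
      Real.sqrt_sq (by norm_num : (0:ℝ) ≤ 1/2)]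
  have habs : (fun ω => |((∑ k ∈ F, Y k ω) + C) - ∫ x, f x ∂μ|) =
      fun ω => |S ω - (∫ ω', S ω' ∂P)| := by
    funext ω
    rw [hSapp, hI]
    ring_nf
  calc ∫ ω, |((∑ k ∈ F, Y k ω) + C) - ∫ x, f x ∂μ| ∂P
      = ∫ ω, |S ω - (∫ ω', S ω' ∂P)| ∂P := by rw [habs]
    _ ≤ Real.sqrt (∫ ω, (S ω - (∫ ω', S ω' ∂P)) ^ 2 ∂P) := h1
    _ ≤ Real.sqrt (T / 4) := by
        rw [h2]
        exact Real.sqrt_le_sqrt h3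
    _ = (1/2) * Real.sqrt T := hsqrt
end

section
/- Let p ≥ 1 be an integer, f : [0,1] → [0,1] non-decreasing, μ a probability measure on [0,1], and ε > 0. Suppose B_1, ..., B_n is a box-cover of f (adjacent boxes covering the graph of f except possibly at box endpoints) with Σ_{i=1}^n A_p(B_i)^p ≤ ε^p, where A_p(B) = ((y^+ − y^-)^p μ((x^-, x^+)))^{1/p} for B = [x^-, x^+] × [y^-, y^+]. Then there exists a box-cover of f with at most 2n boxes, each of generalized area at most ε/n^{1/p}. In particular, N'_p(f, ε/n^{1/p}) ≤ 2n, where N'_p(f, δ) is the minimum cardinality of a box-cover of f with every box of generalized area at most δ. -/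
open MeasureTheory Set Filter Topology


lemma aux_iUnion_Iio (b : ℝ) : (⋃ m : ℕ, Iio (b - 1/(m+1))) = Iio b := by
  ext x
  simp only [mem_iUnion, mem_Iio]
  constructor
  · rintro ⟨m, hm⟩
    have : (0:ℝ) < 1/(m+1) := by positivity
    linarith
  · intro h
    obtain ⟨m, hm⟩ := exists_nat_one_div_lt (sub_pos.2 h)
    exact ⟨m, by linarith⟩

lemma aux_iInter_Iio (a : ℝ) : (⋂ m : ℕ, Iio (a + 1/(m+1))) = Iic a := by
  ext x
  simp only [mem_iInter, mem_Iio, mem_Iic]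
  constructor
  · intro h
    by_contra hx
    push_neg at hx
    obtain ⟨m, hm⟩ := exists_nat_one_div_lt (sub_pos.2 hx)
    exact absurd (h m) (by linarith)
  · intro h m
    have : (0:ℝ) < 1/(m+1) := by positivity
    linarith

lemma aux_frac_anti {b : ℝ} : Monotone (fun m : ℕ => b - 1/(m+1)) := by
  intro m m' h
  have h1 : (0:ℝ) < m + 1 := by positivity
  have h2 : (m:ℝ) + 1 ≤ m' + 1 := by exact_mod_cast Nat.succ_le_succ h
  have := one_div_le_one_div_of_le h1 h2
  simp only []
  linarith

/-- Quantile refinement for a finite measure supported in `(0,1)`. -/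
lemma quantile_key (ν : Measure ℝ) [IsFiniteMeasure ν] (n : ℕ) (hn : 1 ≤ n)
    (hν0 : ν (Set.Iio 0) = 0) (hν1 : ν (Set.Ici 1) = 0) :
    ∃ T : ℕ → ℝ, (∀ j, 1 ≤ j → j ≤ n - 1 → 0 ≤ T j ∧ T j ≤ 1) ∧
      ∀ a b : ℝ, 0 ≤ a → a < b → b ≤ 1 →
        (∀ j, 1 ≤ j → j ≤ n - 1 → T j ≤ a ∨ b ≤ T j) →
        (ν (Set.Ioo a b)).toReal ≤ (ν Set.univ).toReal / n := by
  classical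
  set S : ℝ := (ν Set.univ).toReal with hSdef
  have hS0 : 0 ≤ S := ENNReal.toReal_nonneg
  have hnR : (0:ℝ) < n := by exact_mod_cast hn
  set F : ℝ → ℝ := fun t => (ν (Iio t)).toReal with hFdef
  set G : ℝ → ℝ := fun a => (ν (Iic a)).toReal with hGdef
  have Fmono : Monotone F := fun s t h =>
    ENNReal.toReal_mono (measure_ne_top _ _) (measure_mono (Iio_subset_Iio h))
  have FleS : ∀ t, F t ≤ S := fun t =>
    ENNReal.toReal_mono (measure_ne_top _ _) (measure_mono (subset_univ _))
  have F0 : ∀ t ≤ 0, F t = 0 := by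
    intro t ht
    have : ν (Iio t) = 0 := le_antisymm (hν0 ▸ measure_mono (Iio_subset_Iio ht)) zero_le
    simp [hFdef, this]
  have F1 : F 1 = S := by
    have h1 : ν Set.univ ≤ ν (Iio 1) + ν (Ici 1) := by
      rw [← Iio_union_Ici (a := (1:ℝ))]
      exact measure_union_le _ _
    rw [hν1, add_zero] at h1
    have h2 : ν (Iio 1) = ν Set.univ := le_antisymm (measure_mono (subset_univ _)) h1
    simp [hFdef, hSdef, h2]
  -- left and right limits
  have Fleft : ∀ b : ℝ, Tendsto (fun m : ℕ => F (b - 1/(m+1))) atTop (𝓝 (F b)) := by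
    intro b
    have hmono : Monotone (fun m : ℕ => Iio (b - 1/(m+1))) := fun m m' h =>
      Iio_subset_Iio (aux_frac_anti h)
    have h1 := tendsto_measure_iUnion_atTop (μ := ν) hmono
    rw [aux_iUnion_Iio] at h1
    exact (ENNReal.tendsto_toReal (measure_ne_top _ _)).comp h1
  have Gright : ∀ a : ℝ, Tendsto (fun m : ℕ => F (a + 1/(m+1))) atTop (𝓝 (G a)) := by
    intro a
    have hanti : Antitone (fun m : ℕ => Iio (a + 1/(m+1))) := by
      intro m m' h
      exact Iio_subset_Iio (by have := aux_frac_anti (b := -a) h; simp only [] at this ⊢; linarith)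
    have h1 := tendsto_measure_iInter_atTop (μ := ν)
      (fun m => measurableSet_Iio.nullMeasurableSet) hanti ⟨0, measure_ne_top _ _⟩
    rw [aux_iInter_Iio] at h1
    exact (ENNReal.tendsto_toReal (measure_ne_top _ _)).comp h1
  rcases eq_or_lt_of_le hS0 with hS | hSpos
  · -- trivial case S = 0
    refine ⟨fun _ => 0, fun j _ _ => ⟨le_refl _, zero_le_one⟩, fun a b _ _ _ _ => ?_⟩
    have : (ν (Ioo a b)).toReal ≤ S :=
      ENNReal.toReal_mono (measure_ne_top _ _) (measure_mono (subset_univ _))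
    rw [← hS] at this ⊢
    simpa using this
  · -- main case
    set Q : ℕ → Set ℝ := fun j => {t | (j:ℝ) * S / n ≤ F t} with hQdef
    have hQ1 : ∀ j ≤ n, (1:ℝ) ∈ Q j := by
      intro j hj
      have : (j:ℝ) * S / n ≤ S := by
        rw [div_le_iff₀ hnR]
        have : (j:ℝ) ≤ n := by exact_mod_cast hj
        nlinarith
      simpa [hQdef, F1] using this
    have hQpos : ∀ j, 1 ≤ j → ∀ t ∈ Q j, 0 < t := by
      intro j hj t ht
      by_contra h
      push_neg at h
      have h2 : F t = 0 := F0 t h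
      have h3 : (0:ℝ) < (j:ℝ) * S / n := by
        have : (0:ℝ) < (j:ℝ) := by exact_mod_cast hj
        positivity
      have := ht
      rw [hQdef] at this
      simp only [mem_setOf_eq] at this
      linarith [this, h2]
    have hQbdd : ∀ j, 1 ≤ j → BddBelow (Q j) :=
      fun j hj => ⟨0, fun t ht => (hQpos j hj t ht).le⟩
    set T : ℕ → ℝ := fun j => sInf (Q j) with hTdef
    have hTmem : ∀ j, 1 ≤ j → j ≤ n - 1 → 0 ≤ T j ∧ T j ≤ 1 := by
      intro j h1 h2
      constructor
      · exact le_csInf ⟨1, hQ1 j (by omega)⟩ (fun t ht => (hQpos j h1 t ht).le)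
      · exact csInf_le (hQbdd j h1) (hQ1 j (by omega))
    have hFlt : ∀ j, 1 ≤ j → ∀ s, s < T j → F s < (j:ℝ) * S / n := by
      intro j hj s hs
      by_contra h
      push_neg at h
      have : s ∈ Q j := h
      exact absurd (csInf_le (hQbdd j hj) this) (not_le.2 hs)
    have hFge : ∀ j, 1 ≤ j → j ≤ n → ∀ t, T j < t → (j:ℝ) * S / n ≤ F t := by
      intro j hj hjn t ht
      obtain ⟨t', ht', ht'2⟩ := exists_lt_of_csInf_lt ⟨1, hQ1 j hjn⟩ ht
      exact le_trans ht' (Fmono ht'2.le)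
    refine ⟨T, hTmem, ?_⟩
    intro a b ha hab hb1 hsep
    -- choose j* = max index with T j ≤ a
    set J : Finset ℕ := (Finset.Icc 1 (n-1)).filter (fun j => T j ≤ a) with hJdef
    set j' : ℕ := (insert 0 J).max' (Finset.insert_nonempty _ _) with hj'def
    have hj'mem : j' ∈ insert 0 J := Finset.max'_mem _ _
    have hj'le : j' ≤ n - 1 := by
      rcases Finset.mem_insert.mp hj'mem with h | h
      · omega
      · have := Finset.mem_filter.mp h
        have := Finset.mem_Icc.mp this.1
        omega
    have hGa : (j':ℝ) * S / n ≤ G a := by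
      rcases Finset.mem_insert.mp hj'mem with h | h
      · rw [h]
        simp only [Nat.cast_zero, zero_mul, zero_div]
        exact ENNReal.toReal_nonneg
      · have hf := Finset.mem_filter.mp h
        have hIcc := Finset.mem_Icc.mp hf.1
        refine ge_of_tendsto (Gright a) ?_
        filter_upwards [Filter.eventually_atTop.2 ⟨0, fun m _ => le_refl m⟩] with m _
        refine hFge j' hIcc.1 (by omega) _ ?_
        have : (0:ℝ) < 1/(m+1) := by positivity
        linarith [hf.2]
    have hFb : F b ≤ ((j':ℝ) + 1) * S / n := by
      by_cases hcase : j' + 1 ≤ n - 1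
      · -- b ≤ T (j'+1)
        have hbT : b ≤ T (j' + 1) := by
          rcases hsep (j'+1) (by omega) hcase with h | h
          · exfalso
            have : (j'+1) ∈ insert 0 J := Finset.mem_insert_of_mem
              (Finset.mem_filter.mpr ⟨Finset.mem_Icc.mpr ⟨by omega, hcase⟩, h⟩)
            have := Finset.le_max' (insert 0 J) _ this
            omega
          · exact h
        refine le_of_tendsto (Fleft b) ?_
        filter_upwards [Filter.eventually_atTop.2 ⟨0, fun m _ => le_refl m⟩] with m _
        have h1 : (0:ℝ) < 1/(m+1) := by positivity
        have := hFlt (j'+1) (by omega) (b - 1/(m+1)) (by linarith)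
        push_cast at this ⊢
        linarith
      · -- j' + 1 ≥ n
        have hge : (n:ℝ) ≤ (j':ℝ) + 1 := by
          have : n ≤ j' + 1 := by omega
          exact_mod_cast this
        calc F b ≤ S := FleS b
        _ ≤ ((j':ℝ) + 1) * S / n := by
            rw [le_div_iff₀ hnR]
            nlinarith
    -- combine
    have hdecomp : ν (Iio b) = ν (Iic a) + ν (Ioo a b) := by
      have hun : Iio b = Iic a ∪ Ioo a b := by
        ext x
        simp only [mem_Iio, mem_union, mem_Iic, mem_Ioo]
        constructor
        · intro h
          rcases le_or_gt x a with h2 | h2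
          · exact Or.inl h2
          · exact Or.inr ⟨h2, h⟩
        · rintro (h | h)
          · linarith
          · exact h.2
      rw [hun]
      exact measure_union (by rw [Set.disjoint_left]; intro x hx hx2; exact absurd hx2.1 (by simp at hx ⊢; linarith [hx])) measurableSet_Ioo
    have hFG : (ν (Ioo a b)).toReal = F b - G a := by
      rw [hFdef, hGdef]
      simp only []
      rw [hdecomp, ENNReal.toReal_add (measure_ne_top _ _) (measure_ne_top _ _)]
      ring
    rw [hFG]
    have : ((j':ℝ) + 1) * S / n - (j':ℝ) * S / n = S / n := by ring
    linarith

/-- Refinement of box-covers: from a box-cover `B_1, ..., B_n` of a non-decreasing `f`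
with `Σ A_p(B_i)^p ≤ ε^p`, one can build a box-cover with at most `2n` boxes whose
generalized areas are each at most `ε / n^{1/p}` (i.e. `A_p(B)^p ≤ ε^p / n`). -/
theorem stmt19 (p : ℕ) (hp : 1 ≤ p) (μ : Measure ℝ) [IsProbabilityMeasure μ]
    (f : ℝ → ℝ) (hf : MonotoneOn f (Set.Icc 0 1))
    (hmap : ∀ x ∈ Set.Icc (0:ℝ) 1, f x ∈ Set.Icc (0:ℝ) 1)
    (ε : ℝ) (hε : 0 < ε) (n : ℕ) (hn : 1 ≤ n)
    (c : ℕ → ℝ) (hc0 : c 0 = 0) (hcn : c n = 1) (hcmono : ∀ i < n, c i < c (i + 1))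
    (ylo yhi : ℕ → ℝ)
    (hy : ∀ i, 1 ≤ i → i ≤ n → ylo i ≤ yhi i ∧
      ∀ x ∈ Set.Ioo (c (i - 1)) (c i), ylo i ≤ f x ∧ f x ≤ yhi i)
    (harea : ∑ i ∈ Finset.Icc 1 n,
        (yhi i - ylo i) ^ p * (μ (Set.Ioo (c (i - 1)) (c i))).toReal ≤ ε ^ p) :
    ∃ m : ℕ, 1 ≤ m ∧ m ≤ 2 * n ∧
      ∃ d : ℕ → ℝ, d 0 = 0 ∧ d m = 1 ∧ (∀ i < m, d i < d (i + 1)) ∧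
        ∃ zlo zhi : ℕ → ℝ,
          (∀ i, 1 ≤ i → i ≤ m → zlo i ≤ zhi i ∧
            ∀ x ∈ Set.Ioo (d (i - 1)) (d i), zlo i ≤ f x ∧ f x ≤ zhi i) ∧
          ∀ i, 1 ≤ i → i ≤ m →
            (zhi i - zlo i) ^ p * (μ (Set.Ioo (d (i - 1)) (d i))).toReal ≤ ε ^ p / n := by
  classical
  -- monotonicity facts for `c`
  have hcle : ∀ i j, i ≤ j → j ≤ n → c i ≤ c j := by
    intro i j hij hjn
    induction j with
    | zero => have h0 : i = 0 := by omega
              rw [h0]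
    | succ j ih =>
      by_cases h : i = j + 1
      · subst h; exact le_rfl
      · exact (ih (by omega) (by omega)).trans (hcmono j (by omega)).le
  have hclt : ∀ i j, i < j → j ≤ n → c i < c j := by
    intro i j hij hjn
    have h1 : c i ≤ c (j - 1) := hcle i (j-1) (by omega) (by omega)
    have h2 : c (j-1) < c (j-1+1) := hcmono (j-1) (by omega)
    rw [Nat.sub_add_cancel (by omega)] at h2
    linarith
  have hc01 : ∀ i, i ≤ n → 0 ≤ c i ∧ c i ≤ 1 :=
    fun i hi => ⟨hc0 ▸ hcle 0 i (Nat.zero_le _) hi, hcn ▸ hcle i n hi le_rfl⟩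
  set H : ℕ → ℝ := fun k => (yhi k - ylo k)^p with hHdef
  have hHnn : ∀ k ∈ Finset.Icc 1 n, 0 ≤ H k := fun k hk =>
    pow_nonneg (sub_nonneg.2 (hy k (Finset.mem_Icc.mp hk).1 (Finset.mem_Icc.mp hk).2).1) p
  set X : ℕ → Set ℝ := fun k => Set.Ioo (c (k-1)) (c k) with hXdef
  set ν : Measure ℝ := ∑ k ∈ Finset.Icc 1 n, (ENNReal.ofReal (H k)) • μ.restrict (X k) with hνdef
  have νapp : ∀ A : Set ℝ, MeasurableSet A →
      ν A = ∑ k ∈ Finset.Icc 1 n, ENNReal.ofReal (H k) * μ (A ∩ X k) := by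
    intro A hA
    rw [hνdef, Measure.finset_sum_apply]
    exact Finset.sum_congr rfl fun k _ => by
      rw [Measure.smul_apply, Measure.restrict_apply hA, smul_eq_mul]
  haveI νfin : IsFiniteMeasure ν := by
    constructor
    rw [νapp _ MeasurableSet.univ]
    refine ENNReal.sum_lt_top.mpr fun k _ => ?_
    exact ENNReal.mul_lt_top ENNReal.ofReal_lt_top (measure_lt_top μ _)
  have νtoReal : ∀ A : Set ℝ, MeasurableSet A →
      (ν A).toReal = ∑ k ∈ Finset.Icc 1 n, H k * (μ (A ∩ X k)).toReal := by
    intro A hA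
    rw [νapp A hA, ENNReal.toReal_sum fun k _ =>
      ENNReal.mul_ne_top ENNReal.ofReal_ne_top (measure_ne_top μ _)]
    exact Finset.sum_congr rfl fun k hk => by
      rw [ENNReal.toReal_mul, ENNReal.toReal_ofReal (hHnn k hk)]
  have hν0 : ν (Set.Iio 0) = 0 := by
    rw [νapp _ measurableSet_Iio]
    refine Finset.sum_eq_zero fun k hk => ?_
    have hkn := (Finset.mem_Icc.mp hk).2
    have hempty : Set.Iio 0 ∩ X k = ∅ := by
      ext x
      simp only [hXdef, Set.mem_inter_iff, Set.mem_Iio, Set.mem_Ioo, Set.mem_empty_iff_false,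
        iff_false, not_and, and_imp]
      intro hx hx2 hx3
      have := (hc01 (k-1) (by omega)).1
      linarith
    rw [hempty, measure_empty, mul_zero]
  have hν1 : ν (Set.Ici 1) = 0 := by
    rw [νapp _ measurableSet_Ici]
    refine Finset.sum_eq_zero fun k hk => ?_
    have hkn := (Finset.mem_Icc.mp hk).2
    have hempty : Set.Ici 1 ∩ X k = ∅ := by
      ext x
      simp only [hXdef, Set.mem_inter_iff, Set.mem_Ici, Set.mem_Ioo, Set.mem_empty_iff_false,
        iff_false, not_and, and_imp]
      intro hx hx2 hx3
      have := (hc01 k hkn).2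
      linarith
    rw [hempty, measure_empty, mul_zero]
  have hSle : (ν Set.univ).toReal ≤ ε ^ p := by
    rw [νtoReal _ MeasurableSet.univ]
    calc ∑ k ∈ Finset.Icc 1 n, H k * (μ (Set.univ ∩ X k)).toReal
        = ∑ k ∈ Finset.Icc 1 n, (yhi k - ylo k)^p * (μ (Set.Ioo (c (k-1)) (c k))).toReal := by
          refine Finset.sum_congr rfl fun k _ => by rw [Set.univ_inter]
      _ ≤ ε ^ p := harea
  obtain ⟨T, hTmem, hkey⟩ := quantile_key ν n hn hν0 hν1
  -- cut point set
  set sQ : Finset ℝ := ((Finset.range (n+1)).image c) ∪ ((Finset.Icc 1 (n-1)).image T)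
    with hsQdef
  have hcmemQ : ∀ k, k ≤ n → c k ∈ sQ := fun k hk =>
    Finset.mem_union_left _ (Finset.mem_image.mpr ⟨k, Finset.mem_range.mpr (by omega), rfl⟩)
  have hTmemQ : ∀ j, 1 ≤ j → j ≤ n - 1 → T j ∈ sQ := fun j h1 h2 =>
    Finset.mem_union_right _ (Finset.mem_image.mpr ⟨j, Finset.mem_Icc.mpr ⟨h1, h2⟩, rfl⟩)
  have hcard1 : n + 1 ≤ sQ.card := by
    have h1 : ((Finset.range (n+1)).image c).card = n + 1 := by
      rw [Finset.card_image_of_injOn, Finset.card_range]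
      intro i hi j hj hij
      simp only [Finset.coe_range, Set.mem_Iio] at hi hj
      by_contra hne
      rcases Nat.lt_or_ge i j with h | h
      · exact absurd hij (ne_of_lt (hclt i j h (by omega)))
      · exact absurd hij.symm (ne_of_lt (hclt j i (by omega) (by omega)))
    calc n + 1 = ((Finset.range (n+1)).image c).card := h1.symm
      _ ≤ sQ.card := Finset.card_le_card Finset.subset_union_left
  have hcard2 : sQ.card ≤ 2 * n := by
    calc sQ.card ≤ ((Finset.range (n+1)).image c).card + ((Finset.Icc 1 (n-1)).image T).card :=
          Finset.card_union_le _ _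
      _ ≤ (n+1) + (n-1) := by
          refine add_le_add ?_ ?_
          · exact (Finset.card_image_le).trans (by rw [Finset.card_range])
          · exact (Finset.card_image_le).trans (by rw [Nat.card_Icc]; omega)
      _ ≤ 2 * n := by omega
  set m : ℕ := sQ.card - 1 with hmdef
  have hm1 : m + 1 = sQ.card := by omega
  set e := sQ.orderIsoOfFin rfl with hedef
  set d : ℕ → ℝ := fun i => if h : i < sQ.card then (e ⟨i, h⟩ : ℝ) else 1 with hddef
  have hdval : ∀ i (h : i < sQ.card), d i = (e ⟨i, h⟩ : ℝ) := fun i h => dif_pos h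
  have hdmem : ∀ i, i < sQ.card → d i ∈ sQ := fun i h => by
    rw [hdval i h]; exact (e ⟨i, h⟩).2
  have hdlt : ∀ i j (hi : i < sQ.card) (hj : j < sQ.card), i < j → d i < d j := by
    intro i j hi hj hij
    rw [hdval i hi, hdval j hj]
    exact_mod_cast e.strictMono (show (⟨i, hi⟩ : Fin sQ.card) < ⟨j, hj⟩ from hij)
  have hsQ01 : ∀ x ∈ sQ, 0 ≤ x ∧ x ≤ 1 := by
    intro x hx
    rw [hsQdef] at hx
    rcases Finset.mem_union.mp hx with h | h
    · obtain ⟨i, hi, rfl⟩ := Finset.mem_image.mp h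
      exact hc01 i (by have := Finset.mem_range.mp hi; omega)
    · obtain ⟨j, hj, rfl⟩ := Finset.mem_image.mp h
      obtain ⟨h1, h2⟩ := Finset.mem_Icc.mp hj
      exact hTmem j h1 h2
  have hd01 : ∀ i, i ≤ m → 0 ≤ d i ∧ d i ≤ 1 := fun i hi => hsQ01 _ (hdmem i (by omega))
  have h0mem : (0:ℝ) ∈ sQ := hc0 ▸ hcmemQ 0 (by omega)
  have h1mem : (1:ℝ) ∈ sQ := hcn ▸ hcmemQ n le_rfl
  have hd0 : d 0 = 0 := by
    have h0 : 0 < sQ.card := by omega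
    have hle : d 0 ≤ 0 := by
      rw [hdval 0 h0]
      have h2 : e ⟨0, h0⟩ ≤ e (e.symm ⟨0, h0mem⟩) := e.monotone (Fin.mk_le_of_le_val (Nat.zero_le _))
      have h3 := Subtype.coe_le_coe.mpr h2
      rw [OrderIso.apply_symm_apply] at h3
      exact h3
    linarith [(hd01 0 (by omega)).1]
  have hdm : d m = 1 := by
    have hm : m < sQ.card := by omega
    have hge : 1 ≤ d m := by
      rw [hdval m hm]
      have h2 : e (e.symm ⟨1, h1mem⟩) ≤ e ⟨m, hm⟩ := by
        refine e.monotone ?_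
        have hlt := (e.symm ⟨1, h1mem⟩).isLt
        exact Fin.le_def.mpr (show ((e.symm ⟨1, h1mem⟩ : Fin sQ.card) : ℕ) ≤ m by omega)
      have h3 := Subtype.coe_le_coe.mpr h2
      rw [OrderIso.apply_symm_apply] at h3
      exact h3
    linarith [(hd01 m le_rfl).2]
  have hdmono : ∀ i, i < m → d i < d (i+1) := fun i hi =>
    hdlt i (i+1) (by omega) (by omega) (by omega)
  have hconsec : ∀ i, 1 ≤ i → i ≤ m → ∀ x ∈ sQ, ¬(d (i-1) < x ∧ x < d i) := by
    rintro i h1 h2 x hx ⟨hlt1, hlt2⟩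
    have hi1 : i - 1 < sQ.card := by omega
    have hi : i < sQ.card := by omega
    set j : Fin sQ.card := e.symm ⟨x, hx⟩ with hjdef
    have hxval : (e j : ℝ) = x := by rw [hjdef]; simp
    have h3 : (⟨i-1, hi1⟩ : Fin sQ.card) < j := by
      by_contra h
      push_neg at h
      have h4 : (e j : sQ) ≤ e ⟨i-1, hi1⟩ := e.monotone h
      have h5 : x ≤ d (i-1) := by
        rw [hdval (i-1) hi1, ← hxval]
        exact_mod_cast h4
      linarith
    have h4 : i ≤ j.val := by
      have h3' : i - 1 < j.val := Fin.lt_def.mp h3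
      omega
    have h5 : d i ≤ x := by
      rw [hdval i hi, ← hxval]
      exact_mod_cast e.monotone (Fin.le_def.mpr h4)
    linarith
  have hbox : ∀ i, 1 ≤ i → i ≤ m → ∃ k, 1 ≤ k ∧ k ≤ n ∧ c (k-1) ≤ d (i-1) ∧ d i ≤ c k := by
    intro i h1 h2
    have hKne : ((Finset.Icc 1 n).filter (fun k => c (k-1) ≤ d (i-1))).Nonempty := by
      refine ⟨1, Finset.mem_filter.mpr ⟨Finset.mem_Icc.mpr ⟨le_rfl, hn⟩, ?_⟩⟩
      simpa [hc0] using (hd01 (i-1) (by omega)).1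
    obtain ⟨K, hKmem, hKmax⟩ : ∃ K ∈ (Finset.Icc 1 n).filter (fun k => c (k-1) ≤ d (i-1)),
        ∀ k ∈ (Finset.Icc 1 n).filter (fun k => c (k-1) ≤ d (i-1)), k ≤ K :=
      ⟨_, Finset.max'_mem _ hKne, fun k hk => Finset.le_max' _ k hk⟩
    have hKf := Finset.mem_filter.mp hKmem
    have hKIcc := Finset.mem_Icc.mp hKf.1
    refine ⟨K, hKIcc.1, hKIcc.2, hKf.2, ?_⟩
    by_contra h
    push_neg at h
    have hcK1 : d (i-1) < c K := by
      rcases eq_or_lt_of_le hKIcc.2 with hKn | hKn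
      · exfalso
        have hdile : d i ≤ 1 := (hd01 i h2).2
        rw [hKn, hcn] at h
        linarith
      · have hK1 : K + 1 ∈ Finset.Icc 1 n := Finset.mem_Icc.mpr ⟨by omega, by omega⟩
        have hnotmem : K + 1 ∉ (Finset.Icc 1 n).filter (fun k => c (k-1) ≤ d (i-1)) := by
          intro hmem
          have := hKmax _ hmem
          omega
        have : ¬ (c (K+1-1) ≤ d (i-1)) := fun hcle2 =>
          hnotmem (Finset.mem_filter.mpr ⟨hK1, by simpa using hcle2⟩)
        simp only [Nat.add_sub_cancel] at this
        exact not_le.mp this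
    exact absurd ⟨hcK1, h⟩ (hconsec i h1 h2 (c K) (hcmemQ K hKIcc.2))
  set kk : ℕ → ℕ := fun i => if h : 1 ≤ i ∧ i ≤ m then (hbox i h.1 h.2).choose else 1 with hkkdef
  have hkk : ∀ i, 1 ≤ i → i ≤ m →
      1 ≤ kk i ∧ kk i ≤ n ∧ c (kk i - 1) ≤ d (i-1) ∧ d i ≤ c (kk i) := by
    intro i h1 h2
    have : kk i = (hbox i h1 h2).choose := by rw [hkkdef]; simp only [dif_pos (And.intro h1 h2)]
    rw [this]
    exact (hbox i h1 h2).choose_spec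
  refine ⟨m, by omega, by omega, d, hd0, hdm, hdmono, (fun i => ylo (kk i)),
    (fun i => yhi (kk i)), ?_, ?_⟩
  · intro i h1 h2
    obtain ⟨hk1, hk2, hk3, hk4⟩ := hkk i h1 h2
    exact ⟨(hy _ hk1 hk2).1, fun x hx =>
      (hy _ hk1 hk2).2 x ⟨lt_of_le_of_lt hk3 hx.1, lt_of_lt_of_le hx.2 hk4⟩⟩
  · intro i h1 h2
    obtain ⟨hk1, hk2, hk3, hk4⟩ := hkk i h1 h2
    have hab : d (i-1) < d i := by
      have := hdmono (i-1) (by omega)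
      rwa [Nat.sub_add_cancel h1] at this
    have hsub : Set.Ioo (d (i-1)) (d i) ⊆ X (kk i) := Set.Ioo_subset_Ioo hk3 hk4
    have hstep1 : (yhi (kk i) - ylo (kk i))^p * (μ (Set.Ioo (d (i-1)) (d i))).toReal ≤
        (ν (Set.Ioo (d (i-1)) (d i))).toReal := by
      rw [νtoReal _ measurableSet_Ioo]
      have hmem : kk i ∈ Finset.Icc 1 n := Finset.mem_Icc.mpr ⟨hk1, hk2⟩
      have hsingle := Finset.single_le_sum
        (f := fun k => H k * (μ (Set.Ioo (d (i-1)) (d i) ∩ X k)).toReal)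
        (fun k hk => mul_nonneg (hHnn k hk) ENNReal.toReal_nonneg) hmem
      have heq : Set.Ioo (d (i-1)) (d i) ∩ X (kk i) = Set.Ioo (d (i-1)) (d i) :=
        Set.inter_eq_left.mpr hsub
      rw [heq] at hsingle
      exact hsingle
    have hsep : ∀ j, 1 ≤ j → j ≤ n - 1 → T j ≤ d (i-1) ∨ d i ≤ T j := by
      intro j hj1 hj2
      by_contra h
      push_neg at h
      exact hconsec i h1 h2 (T j) (hTmemQ j hj1 hj2) ⟨h.1, h.2⟩
    have hstep2 := hkey (d (i-1)) (d i) (hd01 (i-1) (by omega)).1 hab (hd01 i h2).2 hsep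
    have hnR : (0:ℝ) < n := by exact_mod_cast hn
    calc (yhi (kk i) - ylo (kk i))^p * (μ (Set.Ioo (d (i-1)) (d i))).toReal
        ≤ (ν (Set.Ioo (d (i-1)) (d i))).toReal := hstep1
      _ ≤ (ν Set.univ).toReal / n := hstep2
      _ ≤ ε ^ p / n := by gcongr
end
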